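/- arXiv:1210.2001 — 7 statements merged into one kernel-verified Lean document; each statement's English description precedes it below -/
import Mathlib

section
/- For every ε > 0 there exists t₀ such that for all real t ≥ t₀ and every positive integer c, the number of positive integers d ≤ t with rad(φ(d)) = c is at most t · L(t)^{-(1-ε)}, where L(t) = exp(log t · (log log log t)/(log log t)); the bound is uniform in c. -/
open Finset

/-- The radical of a natural number: the product of its distinct prime divisors. -/
def rad (n : ℕ) : ℕ := ∏ p ∈ n.primeFactors, p

/-- `L t = exp(log t · (log log log t)/(log log t))`. -/
noncomputable def L (t : ℝ) : ℝ :=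
  Real.exp (Real.log t * (Real.log (Real.log (Real.log t)) / Real.log (Real.log t)))

/-!
If `rad φ(d) = c` and the prime `q` divides `d`, then `q - 1 = φ(q) ∣ φ(d)`, so `rad (q - 1) ∣ c`.
Hence every `d` in the fiber factors over the primes `Q = {q : rad (q - 1) ∣ c}`, and every `q - 1`
with `q ∈ Q` factors over the primes of `c ≤ t`, of which there are at most `log₂ t`. Rankin's
trick with `σ = 1 - (1 - ε/2) log x / x`, `x = log log t`, and two Euler products bound the fiber
by `t^σ ∏_{q ∈ Q} (1 - q^{-σ})⁻¹ ≤ t^σ exp (4 exp (4 ∑_{p ∣ c} p^{-σ}))`. A Chebyshev bound gives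
`∑_{p ∣ c} p^{-σ} = o(x)` uniformly in `c`, so the double exponential is `o(log L(t))`, while
`t^σ = t L(t)^{-(1 - ε/2)}`.
-/

namespace RadTotient

open Real Filter Asymptotics
open Nat (primesLE mem_primesLE factoredNumbers mem_factoredNumbers_iff_primeFactors_subset)

lemma rad_ne_zero (n : ℕ) : rad n ≠ 0 :=
  prod_ne_zero_iff.mpr fun _ hp => (Nat.prime_of_mem_primeFactors hp).ne_zero

lemma rad_le_self {n : ℕ} (hn : n ≠ 0) : rad n ≤ n :=
  Nat.le_of_dvd (Nat.pos_of_ne_zero hn) (Nat.prod_primeFactors_dvd n)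

lemma rad_dvd_rad {m n : ℕ} (hn : n ≠ 0) (h : m ∣ n) : rad m ∣ rad n :=
  prod_dvd_prod_of_subset _ _ _ (Nat.primeFactors_mono h hn)

lemma primeFactors_subset_of_rad_dvd {m c : ℕ} (hc : c ≠ 0) (h : rad m ∣ c) :
    m.primeFactors ⊆ c.primeFactors := fun _ hp =>
  Nat.mem_primeFactors.mpr
    ⟨Nat.prime_of_mem_primeFactors hp, (dvd_prod_of_mem _ hp).trans h, hc⟩

lemma two_pow_card_primeFactors_le {c : ℕ} (hc : c ≠ 0) : 2 ^ #c.primeFactors ≤ c :=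
  calc 2 ^ #c.primeFactors = ∏ _p ∈ c.primeFactors, 2 := (prod_const 2).symm
    _ ≤ rad c := prod_le_prod' fun _ hp => (Nat.prime_of_mem_primeFactors hp).two_le
    _ ≤ c := rad_le_self hc

lemma card_primeFactors_le_two_mul_log {c : ℕ} (hc : c ≠ 0) {t : ℝ} (hct : (c : ℝ) ≤ t) :
    (#c.primeFactors : ℝ) ≤ 2 * log t := by
  have h2 : (2 : ℝ) ^ #c.primeFactors ≤ t :=
    (by exact_mod_cast two_pow_card_primeFactors_le hc : (2 : ℝ) ^ #c.primeFactors ≤ c).trans hct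
  have := log_le_log (by positivity) h2
  rw [Real.log_pow] at this
  nlinarith [log_two_gt_d9]

noncomputable def radTotientFiber (t : ℝ) (c : ℕ) : Finset ℕ := {d ∈ Icc 1 ⌊t⌋₊ | rad d.totient = c}

lemma cast_le_of_mem_radTotientFiber {t : ℝ} {c d : ℕ} (hd : d ∈ radTotientFiber t c) :
    (c : ℝ) ≤ t := by
  obtain ⟨hdI, rfl⟩ := mem_filter.mp hd
  obtain ⟨hd1, hdt⟩ := mem_Icc.mp hdI
  have ht : 1 ≤ t := (Nat.one_le_floor_iff t).mp (hd1.trans hdt)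
  exact (Nat.le_floor_iff (by linarith)).mp
    ((rad_le_self (Nat.totient_pos.mpr hd1).ne').trans ((Nat.totient_le d).trans hdt))

def fiberPrimes (c N : ℕ) : Finset ℕ := {q ∈ primesLE N | rad (q - 1) ∣ c}

lemma mem_factoredNumbers_fiberPrimes {d N : ℕ} (hd : d ≠ 0) (hdN : d ≤ N) :
    d ∈ factoredNumbers (fiberPrimes (rad d.totient) N) := by
  refine mem_factoredNumbers_iff_primeFactors_subset.mpr ⟨hd, fun q hq => ?_⟩
  obtain ⟨hqp, hqd, -⟩ := Nat.mem_primeFactors.mp hq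
  refine mem_filter.mpr ⟨mem_primesLE.mpr ⟨(Nat.le_of_dvd (by omega) hqd).trans hdN, hqp⟩, ?_⟩
  rw [← Nat.totient_prime hqp]
  exact rad_dvd_rad (Nat.totient_pos.mpr (by omega)).ne' (Nat.totient_dvd_of_dvd hqd)

lemma sub_one_mem_factoredNumbers {c N q : ℕ} (hc : c ≠ 0) (hq : q ∈ fiberPrimes c N) :
    q - 1 ∈ factoredNumbers c.primeFactors := by
  obtain ⟨hqN, hqc⟩ := mem_filter.mp hq
  have := (Nat.prime_of_mem_primesLE hqN).two_le
  exact mem_factoredNumbers_iff_primeFactors_subset.mpr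
    ⟨by omega, primeFactors_subset_of_rad_dvd hc hqc⟩

lemma card_le_rpow_mul_sum_rpow_neg {M : Finset ℕ} {t σ : ℝ} (hσ : 0 ≤ σ)
    (hM : ∀ m ∈ M, 1 ≤ m ∧ (m : ℝ) ≤ t) :
    (#M : ℝ) ≤ t ^ σ * ∑ m ∈ M, (m : ℝ) ^ (-σ) := by
  rw [mul_sum, card_eq_sum_ones, Nat.cast_sum, Nat.cast_one]
  refine sum_le_sum fun m hm => ?_
  obtain ⟨hm1, hmt⟩ := hM m hm
  have hm0 : (0 : ℝ) < m := by exact_mod_cast hm1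
  rw [rpow_neg hm0.le, ← div_eq_mul_inv, ← div_rpow (hm0.le.trans hmt) hm0.le]
  exact one_le_rpow ((one_le_div hm0).mpr hmt) hσ

noncomputable def rpowNegHom (σ : ℝ) : ℕ →* ℝ where
  toFun n := (n : ℝ) ^ (-σ)
  map_one' := by simp
  map_mul' m n := by push_cast; exact mul_rpow (Nat.cast_nonneg m) (Nat.cast_nonneg n)

lemma rpowNegHom_nonneg (σ : ℝ) (n : ℕ) : 0 ≤ rpowNegHom σ n := rpow_nonneg n.cast_nonneg _

lemma sum_rpow_neg_le_prod_of_subset_factoredNumbers {σ : ℝ} (hσ : 0 < σ) {P M : Finset ℕ}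
    (hM : ↑M ⊆ factoredNumbers P) :
    ∑ m ∈ M, (m : ℝ) ^ (-σ) ≤ ∏ p ∈ P with p.Prime, (1 - (p : ℝ) ^ (-σ))⁻¹ := by
  have hlt : ∀ {p : ℕ}, p.Prime → ‖rpowNegHom σ p‖ < 1 := fun {p} hp => by
    rw [Real.norm_of_nonneg (rpowNegHom_nonneg σ p)]
    exact rpow_lt_one_of_one_lt_of_neg (by exact_mod_cast hp.one_lt) (by linarith)
  have hsum := hasSum_subtype_iff_indicator.mp
    (EulerProduct.summable_and_hasSum_factoredNumbers_prod_filter_prime_geometric hlt P).2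
  refine le_of_eq_of_le (sum_congr rfl fun m hm => ?_)
    (sum_le_hasSum M (fun _ _ => Set.indicator_nonneg (fun n _ => rpowNegHom_nonneg σ n) _) hsum)
  rw [Set.indicator_of_mem (hM hm)]
  rfl

lemma inv_one_sub_le_exp {y : ℝ} (hy0 : 0 ≤ y) (hy : y ≤ 3 / 4) : (1 - y)⁻¹ ≤ exp (4 * y) :=
  calc (1 - y)⁻¹ ≤ 1 + 4 * y := by
        rw [inv_le_iff_one_le_mul₀ (by linarith)]
        nlinarith
    _ ≤ exp (4 * y) := by linarith [add_one_le_exp (4 * y)]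

lemma prime_rpow_neg_le {p : ℕ} (hp : p.Prime) {σ : ℝ} (hσ : 1 / 2 ≤ σ) :
    (p : ℝ) ^ (-σ) ≤ 3 / 4 := by
  have h2 : (2 : ℝ) ≤ p := by exact_mod_cast hp.two_le
  calc (p : ℝ) ^ (-σ) ≤ 2 ^ (-σ) := rpow_le_rpow_of_nonpos two_pos h2 (by linarith)
    _ ≤ 2 ^ (-(1 / 2) : ℝ) := rpow_le_rpow_of_exponent_le one_le_two (by linarith)
    _ = (√2)⁻¹ := by rw [rpow_neg zero_le_two, sqrt_eq_rpow]
    _ ≤ 3 / 4 := by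
      rw [inv_le_comm₀ (by positivity) (by norm_num), le_sqrt (by norm_num) (by norm_num)]
      norm_num

lemma sum_rpow_neg_le_exp_of_subset_factoredNumbers {σ : ℝ} (hσ : 1 / 2 ≤ σ) {P M : Finset ℕ}
    (hP : ∀ p ∈ P, p.Prime) (hM : ↑M ⊆ factoredNumbers P) :
    ∑ m ∈ M, (m : ℝ) ^ (-σ) ≤ exp (4 * ∑ p ∈ P, (p : ℝ) ^ (-σ)) := by
  refine (sum_rpow_neg_le_prod_of_subset_factoredNumbers (by linarith) hM).trans ?_
  rw [filter_true_of_mem hP, mul_sum, exp_sum]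
  refine prod_le_prod (fun p hp => ?_) fun p hp =>
    inv_one_sub_le_exp (by positivity) (prime_rpow_neg_le (hP p hp) hσ)
  have := prime_rpow_neg_le (hP p hp) hσ
  exact inv_nonneg.mpr (by linarith)

lemma sum_fiberPrimes_rpow_neg_le {σ : ℝ} (hσ : 1 / 2 ≤ σ) {c : ℕ} (hc : c ≠ 0) (N : ℕ) :
    ∑ q ∈ fiberPrimes c N, (q : ℝ) ^ (-σ) ≤ exp (4 * ∑ p ∈ c.primeFactors, (p : ℝ) ^ (-σ)) := by
  have hprime : ∀ q ∈ fiberPrimes c N, q.Prime := fun q hq =>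
    Nat.prime_of_mem_primesLE (mem_filter.mp hq).1
  calc ∑ q ∈ fiberPrimes c N, (q : ℝ) ^ (-σ)
      ≤ ∑ q ∈ fiberPrimes c N, ((q - 1 : ℕ) : ℝ) ^ (-σ) := sum_le_sum fun q hq => by
        have := (hprime q hq).two_le
        exact rpow_le_rpow_of_nonpos (by exact_mod_cast (by omega : 0 < q - 1))
          (by exact_mod_cast Nat.sub_le q 1) (by linarith)
    _ = ∑ m ∈ (fiberPrimes c N).image (fun q : ℕ => q - 1), (m : ℝ) ^ (-σ) := by
        rw [sum_image]
        intro a ha b hb (hab : a - 1 = b - 1)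
        have := (hprime a ha).two_le
        have := (hprime b hb).two_le
        omega
    _ ≤ exp (4 * ∑ p ∈ c.primeFactors, (p : ℝ) ^ (-σ)) := by
        refine sum_rpow_neg_le_exp_of_subset_factoredNumbers hσ
          (fun p hp => Nat.prime_of_mem_primeFactors hp) ?_
        simp only [coe_image, Set.image_subset_iff]
        exact fun q hq => sub_one_mem_factoredNumbers hc hq

lemma card_radTotientFiber_le {t σ : ℝ} (ht : 0 ≤ t) (hσ : 1 / 2 ≤ σ) {c : ℕ} (hc : c ≠ 0) :
    (#(radTotientFiber t c) : ℝ) ≤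
      t ^ σ * exp (4 * exp (4 * ∑ p ∈ c.primeFactors, (p : ℝ) ^ (-σ))) := by
  have hD : ∀ d ∈ radTotientFiber t c, 1 ≤ d ∧ d ≤ ⌊t⌋₊ ∧ rad d.totient = c := fun d hd => by
    simpa only [radTotientFiber, mem_filter, mem_Icc, and_assoc] using hd
  calc (#(radTotientFiber t c) : ℝ) ≤ t ^ σ * ∑ d ∈ radTotientFiber t c, (d : ℝ) ^ (-σ) :=
        card_le_rpow_mul_sum_rpow_neg (by linarith) fun d hd =>
          ⟨(hD d hd).1, (Nat.le_floor_iff ht).mp (hD d hd).2.1⟩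
    _ ≤ t ^ σ * exp (4 * ∑ q ∈ fiberPrimes c ⌊t⌋₊, (q : ℝ) ^ (-σ)) := by
        gcongr
        refine sum_rpow_neg_le_exp_of_subset_factoredNumbers hσ
          (fun q hq => Nat.prime_of_mem_primesLE (mem_filter.mp hq).1) fun d hd => ?_
        obtain ⟨hd1, hdN, rfl⟩ := hD d hd
        exact mem_factoredNumbers_fiberPrimes (by omega) hdN
    _ ≤ t ^ σ * exp (4 * exp (4 * ∑ p ∈ c.primeFactors, (p : ℝ) ^ (-σ))) := by
        gcongr
        exact sum_fiberPrimes_rpow_neg_le hσ hc _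

def dyadicPrimes (j : ℕ) : Finset ℕ := {p ∈ Ioc (2 ^ j) (2 ^ (j + 1)) | p.Prime}

/-- Each prime of the block exceeds `2 ^ j` and divides `(2 ^ (j + 1))# ≤ 4 ^ 2 ^ (j + 1)`. -/
lemma mul_card_dyadicPrimes_le (j : ℕ) : j * #(dyadicPrimes j) ≤ 2 ^ (j + 2) := by
  have hsub : dyadicPrimes j ⊆ {p ∈ range (2 ^ (j + 1) + 1) | p.Prime} := fun p hp => by
    simp only [dyadicPrimes, mem_filter, mem_Ioc, mem_range] at hp ⊢
    exact ⟨by omega, hp.2⟩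
  have hpow : 2 ^ (j * #(dyadicPrimes j)) ≤ 2 ^ 2 ^ (j + 2) :=
    calc 2 ^ (j * #(dyadicPrimes j)) = ∏ _p ∈ dyadicPrimes j, 2 ^ j := by
          rw [prod_const, ← pow_mul]
      _ ≤ ∏ p ∈ dyadicPrimes j, p := prod_le_prod' fun p hp => by
          simp only [dyadicPrimes, mem_filter, mem_Ioc] at hp
          omega
      _ ≤ primorial (2 ^ (j + 1)) :=
          Nat.le_of_dvd (primorial_pos _) (prod_dvd_prod_of_subset _ _ _ hsub)
      _ ≤ 4 ^ 2 ^ (j + 1) := primorial_le_four_pow _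
      _ = 2 ^ 2 ^ (j + 2) := by
          rw [show (4 : ℕ) = 2 ^ 2 by rfl, ← pow_mul, pow_succ 2 (j + 1), mul_comm]
  exact (Nat.pow_le_pow_iff_right (by norm_num)).mp hpow

lemma sum_inv_dyadicPrimes_le {j : ℕ} (hj : 0 < j) :
    ∑ p ∈ dyadicPrimes j, (1 / p : ℝ) ≤ 4 / j := by
  have hcard : (j : ℝ) * #(dyadicPrimes j) ≤ 2 ^ (j + 2) := by
    exact_mod_cast mul_card_dyadicPrimes_le j
  calc ∑ p ∈ dyadicPrimes j, (1 / p : ℝ) ≤ ∑ _p ∈ dyadicPrimes j, 1 / (2 : ℝ) ^ j :=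
        sum_le_sum fun p hp => by
          simp only [dyadicPrimes, mem_filter, mem_Ioc] at hp
          gcongr
          exact_mod_cast hp.1.1.le
    _ = #(dyadicPrimes j) / 2 ^ j := by rw [sum_const, nsmul_eq_mul, mul_one_div]
    _ ≤ 4 / j := by
      rw [div_le_div_iff₀ (by positivity) (by exact_mod_cast hj)]
      linarith [show (2 : ℝ) ^ (j + 2) = 4 * 2 ^ j by ring]

lemma primesLE_two_pow_succ_succ (J : ℕ) :
    primesLE (2 ^ (J + 2)) = primesLE (2 ^ (J + 1)) ∪ dyadicPrimes (J + 1) := by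
  ext p
  simp only [mem_union, mem_primesLE, dyadicPrimes, mem_filter, mem_Ioc]
  have h2 : 2 ^ (J + 2) = 2 * 2 ^ (J + 1) := by ring
  constructor
  · rintro ⟨hp, hpr⟩
    by_cases h : p ≤ 2 ^ (J + 1)
    · exact Or.inl ⟨h, hpr⟩
    · exact Or.inr ⟨⟨by omega, by omega⟩, hpr⟩
  · rintro (⟨hp, hpr⟩ | ⟨hp, hpr⟩) <;> exact ⟨by omega, hpr⟩

lemma sum_inv_primesLE_two_pow_le (J : ℕ) :
    ∑ p ∈ primesLE (2 ^ (J + 1)), (1 / p : ℝ) ≤ 1 / 2 + 4 * harmonic J := by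
  induction J with
  | zero => simp [show primesLE 2 = {2} by decide]
  | succ J ih =>
    have hdisj : Disjoint (primesLE (2 ^ (J + 1))) (dyadicPrimes (J + 1)) :=
      disjoint_left.mpr fun p hp hp' => by
        simp only [mem_primesLE, dyadicPrimes, mem_filter, mem_Ioc] at hp hp'
        omega
    rw [primesLE_two_pow_succ_succ, sum_union hdisj, harmonic_succ]
    have := sum_inv_dyadicPrimes_le (j := J + 1) (by omega)
    push_cast at this ⊢
    rw [div_eq_mul_inv] at this
    linarith

lemma sum_inv_primesLE_le {z : ℝ} (hz : 2 ≤ z) :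
    ∑ p ∈ primesLE ⌊z⌋₊, (1 / p : ℝ) ≤ 9 + 4 * log (log z) := by
  set J := Nat.log 2 ⌊z⌋₊
  have hz0 : 0 < z := by linarith
  have h2z : 2 ≤ ⌊z⌋₊ := Nat.le_floor (by exact_mod_cast hz)
  have hJ : 0 < J := Nat.log_pos (by norm_num) h2z
  have hJz : (J : ℝ) ≤ 2 * log z := by
    have h : ((2 ^ J : ℕ) : ℝ) ≤ z :=
      (Nat.cast_le.mpr (Nat.pow_log_le_self 2 (by omega))).trans (Nat.floor_le hz0.le)
    push_cast at h
    have h' := log_le_log (by positivity) h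
    rw [Real.log_pow] at h'
    nlinarith [log_two_gt_d9]
  have hsub : primesLE ⌊z⌋₊ ⊆ primesLE (2 ^ (J + 1)) := fun p hp => by
    simp only [mem_primesLE] at hp ⊢
    exact ⟨hp.1.trans (Nat.lt_pow_succ_log_self (by norm_num) _).le, hp.2⟩
  have hlogJ : log J ≤ 1 + log (log z) := by
    have hlz : 0 < log z := log_pos (by linarith)
    calc log J ≤ log (2 * log z) := log_le_log (by exact_mod_cast hJ) hJz
      _ = log 2 + log (log z) := log_mul two_ne_zero hlz.ne'
      _ ≤ 1 + log (log z) := by linarith [log_two_lt_d9]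
  calc ∑ p ∈ primesLE ⌊z⌋₊, (1 / p : ℝ) ≤ ∑ p ∈ primesLE (2 ^ (J + 1)), (1 / p : ℝ) :=
        sum_le_sum_of_subset_of_nonneg hsub fun _ _ _ => by positivity
    _ ≤ 1 / 2 + 4 * harmonic J := sum_inv_primesLE_two_pow_le J
    _ ≤ 9 + 4 * log (log z) := by linarith [harmonic_le_one_add_log J]

lemma sum_rpow_neg_le_of_forall_le {S : Finset ℕ} {z σ : ℝ}
    (hS : ∀ p ∈ S, p.Prime ∧ (p : ℝ) ≤ z) (hz : 2 ≤ z) (hσ : σ ≤ 1) :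
    ∑ p ∈ S, (p : ℝ) ^ (-σ) ≤ z ^ (1 - σ) * (9 + 4 * log (log z)) :=
  calc ∑ p ∈ S, (p : ℝ) ^ (-σ) ≤ ∑ p ∈ S, z ^ (1 - σ) * (1 / p : ℝ) := sum_le_sum fun p hp => by
        have hp0 : (0 : ℝ) < p := by exact_mod_cast (hS p hp).1.pos
        rw [show -σ = (1 - σ) + -1 by ring, rpow_add hp0, rpow_neg_one, ← one_div]
        gcongr
        exact (hS p hp).2
    _ = z ^ (1 - σ) * ∑ p ∈ S, (1 / p : ℝ) := (mul_sum _ _ _).symm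
    _ ≤ z ^ (1 - σ) * ∑ p ∈ primesLE ⌊z⌋₊, (1 / p : ℝ) := by
        refine mul_le_mul_of_nonneg_left (sum_le_sum_of_subset_of_nonneg (fun p hp => ?_)
          fun _ _ _ => by positivity) (by positivity)
        exact mem_primesLE.mpr ⟨Nat.le_floor (hS p hp).2, (hS p hp).1⟩
    _ ≤ z ^ (1 - σ) * (9 + 4 * log (log z)) := by gcongr; exact sum_inv_primesLE_le hz

lemma sum_rpow_neg_le {S : Finset ℕ} (hS : ∀ p ∈ S, p.Prime) {z σ : ℝ} (hz : 2 ≤ z)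
    (hσ0 : 0 ≤ σ) (hσ1 : σ ≤ 1) :
    ∑ p ∈ S, (p : ℝ) ^ (-σ) ≤ z ^ (1 - σ) * (9 + 4 * log (log z)) + #S * z ^ (-σ) := by
  rw [← sum_filter_add_sum_filter_not S (fun p => (p : ℝ) ≤ z)]
  refine add_le_add (sum_rpow_neg_le_of_forall_le (fun p hp =>
    ⟨hS p (mem_filter.mp hp).1, (mem_filter.mp hp).2⟩) hz hσ1) ?_
  calc ∑ p ∈ S.filter (fun p : ℕ => ¬(p : ℝ) ≤ z), (p : ℝ) ^ (-σ)
      ≤ ∑ _p ∈ S.filter (fun p : ℕ => ¬(p : ℝ) ≤ z), z ^ (-σ) :=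
        sum_le_sum fun p hp =>
          rpow_le_rpow_of_nonpos (by linarith) (not_le.mp (mem_filter.mp hp).2).le (by linarith)
    _ ≤ #S * z ^ (-σ) := by
        rw [sum_const, nsmul_eq_mul]
        gcongr
        exact filter_subset _ _

/-- Rankin's exponent, to be evaluated at `x = log log t`; then
`t ^ σ = t * L t ^ (-(1 - ε / 2))`. -/
noncomputable def rankinExponent (ε x : ℝ) : ℝ := 1 - (1 - ε / 2) * (log x / x)

lemma rpow_rankinExponent_mul_exp {t : ℝ} (ht : 0 < t) (ε : ℝ) :
    t ^ rankinExponent ε (log (log t)) *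
        exp (ε / 2 * (log t * (log (log (log t)) / log (log t)))) =
      t * L t ^ (-(1 - ε)) := by
  unfold L rankinExponent
  rw [rpow_def_of_pos ht, ← exp_mul, ← exp_add]
  conv_rhs => arg 1; rw [← exp_log ht]
  rw [← exp_add]
  ring_nf

lemma mul_exp_rpow_one_sub_rankinExponent_le {ε x : ℝ} (hε : 0 ≤ ε) (hx : 1 ≤ x)
    (hℓ2 : log x ^ 2 ≤ x) :
    (x * exp x) ^ (1 - rankinExponent ε x) ≤ exp 1 * x ^ (1 - ε / 2) := by
  have hx0 : 0 < x := by linarith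
  have hℓ2x : log x ^ 2 / x ≤ 1 := div_le_one_of_le₀ hℓ2 hx0.le
  rw [rpow_def_of_pos (by positivity), log_mul hx0.ne' (exp_pos x).ne', log_exp,
    rpow_def_of_pos hx0, ← exp_add]
  gcongr
  have : (log x + x) * (1 - rankinExponent ε x) =
      (1 - ε / 2) * (log x ^ 2 / x) + log x * (1 - ε / 2) := by
    unfold rankinExponent
    field_simp
    ring
  rw [this]
  linarith [mul_le_one₀ (by linarith : 1 - ε / 2 ≤ 1) (by positivity) hℓ2x]

lemma exp_mul_mul_exp_rpow_neg_rankinExponent_le {ε x : ℝ} (hx : 1 ≤ x)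
    (hℓx : log x / x ≤ ε / 2) :
    exp x * (x * exp x) ^ (-rankinExponent ε x) ≤ 1 := by
  have hx0 : 0 < x := by linarith
  have hℓx0 : 0 ≤ log x / x := div_nonneg (log_nonneg hx) hx0.le
  rw [rpow_def_of_pos (by positivity), log_mul hx0.ne' (exp_pos x).ne', log_exp, ← exp_add,
    exp_le_one_iff]
  have : x + (log x + x) * -rankinExponent ε x =
      log x * ((1 - ε / 2) * (log x / x) - ε / 2) := by
    unfold rankinExponent
    field_simp
    ring
  rw [this]
  exact mul_nonpos_of_nonneg_of_nonpos (log_nonneg hx)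
    (by nlinarith [mul_nonneg (by linarith : 0 ≤ ε / 2) hℓx0])

/-- The threshold `z = x eˣ` is large enough for the at most `2 eˣ` primes above it to contribute
`O(1)`, and small enough for `z ^ (1 - σ) = O(x ^ (1 - ε / 2))`. -/
lemma sum_rpow_neg_rankinExponent_le {ε x : ℝ} (hε2 : ε ≤ 2) (hx : 1 ≤ x)
    (hℓx : log x / x ≤ ε / 2) (hℓ2 : log x ^ 2 ≤ x) {S : Finset ℕ} (hS : ∀ p ∈ S, p.Prime)
    (hcard : (#S : ℝ) ≤ 2 * exp x) :
    ∑ p ∈ S, (p : ℝ) ^ (-rankinExponent ε x) ≤ exp 1 * x ^ (1 - ε / 2) * (13 + 4 * log x) + 2 := by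
  have hx0 : 0 < x := by linarith
  have hℓ0 : 0 ≤ log x := log_nonneg (by linarith)
  have hℓx0 : 0 ≤ log x / x := div_nonneg hℓ0 hx0.le
  have hε : 0 ≤ ε := by linarith
  have hσ : 0 ≤ rankinExponent ε x ∧ rankinExponent ε x ≤ 1 := by
    unfold rankinExponent
    constructor <;> nlinarith [mul_nonneg (by linarith : 0 ≤ ε / 2) hℓx0]
  have hlogz : log (x * exp x) = log x + x := by rw [log_mul hx0.ne' (exp_pos x).ne', log_exp]
  have hz : 2 ≤ x * exp x := by nlinarith [add_one_le_exp x]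
  have hloglogz : 0 ≤ log (log (x * exp x)) ∧ log (log (x * exp x)) ≤ 1 + log x := by
    rw [hlogz]
    refine ⟨log_nonneg (by linarith), ?_⟩
    calc log (log x + x) ≤ log (2 * x) :=
          log_le_log (by positivity) (by linarith [log_le_self hx0.le])
      _ = log 2 + log x := log_mul two_ne_zero hx0.ne'
      _ ≤ 1 + log x := by linarith [log_two_lt_d9]
  calc ∑ p ∈ S, (p : ℝ) ^ (-rankinExponent ε x)
      ≤ (x * exp x) ^ (1 - rankinExponent ε x) * (9 + 4 * log (log (x * exp x))) +
        #S * (x * exp x) ^ (-rankinExponent ε x) := sum_rpow_neg_le hS hz hσ.1 hσ.2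
    _ ≤ exp 1 * x ^ (1 - ε / 2) * (13 + 4 * log x) +
        2 * (exp x * (x * exp x) ^ (-rankinExponent ε x)) := by
      refine add_le_add (mul_le_mul
        (mul_exp_rpow_one_sub_rankinExponent_le hε hx hℓ2)
        (by linarith [hloglogz.2]) (by linarith [hloglogz.1]) (by positivity)) ?_
      rw [← mul_assoc]
      exact mul_le_mul_of_nonneg_right hcard (by positivity)
    _ ≤ exp 1 * x ^ (1 - ε / 2) * (13 + 4 * log x) + 2 := by
      linarith [exp_mul_mul_exp_rpow_neg_rankinExponent_le hx hℓx]

lemma eventually_log_div_self_le {c : ℝ} (hc : 0 < c) : ∀ᶠ x in atTop, log x / x ≤ c := by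
  filter_upwards [isLittleO_log_id_atTop.bound hc, eventually_gt_atTop 0] with x hx hx0
  rw [div_le_iff₀ hx0]
  simpa [abs_of_pos hx0] using (le_abs_self _).trans hx

lemma eventually_half_le_rankinExponent {ε : ℝ} (hε : 0 ≤ ε) :
    ∀ᶠ x in atTop, 1 / 2 ≤ rankinExponent ε x := by
  filter_upwards [eventually_log_div_self_le one_half_pos, eventually_ge_atTop 1] with x hx hx1
  have : (1 - ε / 2) * (log x / x) ≤ log x / x :=
    mul_le_of_le_one_left (div_nonneg (log_nonneg hx1) (by linarith)) (by linarith)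
  simp only [rankinExponent]
  linarith

lemma eventually_mul_rpow_le {ε : ℝ} (hε : 0 < ε) :
    ∀ᶠ x in atTop, exp 1 * x ^ (1 - ε / 2) * (13 + 4 * log x) + 2 ≤ x / 8 := by
  have hlog : (fun x => 13 + 4 * log x) =o[atTop] fun x => x ^ (ε / 2) :=
    (isLittleO_const_left.mpr <| Or.inr <|
      tendsto_norm_atTop_atTop.comp (tendsto_rpow_atTop (by positivity))).add
      ((isLittleO_log_rpow_atTop (by positivity)).const_mul_left 4)
  have hmain : (fun x => exp 1 * x ^ (1 - ε / 2) * (13 + 4 * log x) + 2) =o[atTop] id := by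
    refine IsLittleO.add ?_ (isLittleO_const_id_atTop 2)
    refine (((isBigO_refl (fun x : ℝ => x ^ (1 - ε / 2)) atTop).mul_isLittleO hlog).const_mul_left
      (exp 1)).congr' (Eventually.of_forall fun x => by ring) ?_
    filter_upwards [eventually_gt_atTop 0] with x hx
    rw [← rpow_add hx, sub_add_cancel, rpow_one, id]
  filter_upwards [hmain.bound (by norm_num : (0 : ℝ) < 1 / 8), eventually_gt_atTop 0] with x hx hx0
  rw [id, Real.norm_of_nonneg hx0.le] at hx
  linarith [Real.le_norm_self (exp 1 * x ^ (1 - ε / 2) * (13 + 4 * log x) + 2)]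

lemma eventually_log_sq_le_self : ∀ᶠ x in atTop, log x ^ 2 ≤ x := by
  filter_upwards [(isLittleO_pow_log_id_atTop (n := 2)).bound one_pos, eventually_gt_atTop 0]
    with x hx hx0
  rw [id, one_mul, Real.norm_of_nonneg hx0.le, Real.norm_of_nonneg (by positivity)] at hx
  exact hx

lemma eventually_sum_rpow_neg_rankinExponent_le {ε : ℝ} (hε : 0 < ε) (hε2 : ε ≤ 2) :
    ∀ᶠ x in atTop, ∀ S : Finset ℕ, (∀ p ∈ S, p.Prime) → (#S : ℝ) ≤ 2 * exp x →
      ∑ p ∈ S, (p : ℝ) ^ (-rankinExponent ε x) ≤ x / 8 := by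
  filter_upwards [eventually_log_div_self_le (half_pos hε), eventually_log_sq_le_self,
    eventually_mul_rpow_le hε, eventually_ge_atTop 1] with x hℓx hℓ2 hsmall hx S hS hcard
  exact (sum_rpow_neg_rankinExponent_le hε2 hx hℓx hℓ2 hS hcard).trans hsmall

lemma eventually_four_mul_exp_le {ε : ℝ} (hε : 0 < ε) :
    ∀ᶠ x in atTop, 4 * exp (4 * (x / 8)) ≤ ε / 2 * (exp x * (log x / x)) := by
  filter_upwards [(isLittleO_pow_exp_pos_mul_atTop 1 one_half_pos).bound
    (by positivity : 0 < ε / 8), eventually_ge_atTop 3] with x hx hx3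
  have hx0 : 0 < x := by linarith
  have hℓ : 1 ≤ log x := by
    rw [le_log_iff_exp_le hx0]
    linarith [exp_one_lt_d9]
  rw [pow_one, Real.norm_of_nonneg hx0.le, Real.norm_of_nonneg (exp_pos _).le] at hx
  have hmul : 4 * exp (4 * (x / 8)) * x ≤ ε / 2 * exp x := by
    have hexp : exp x = exp (1 / 2 * x) * exp (1 / 2 * x) := by rw [← exp_add]; ring_nf
    rw [hexp, show 4 * (x / 8) = 1 / 2 * x by ring]
    nlinarith [mul_le_mul_of_nonneg_left hx (by positivity : 0 ≤ 4 * exp (1 / 2 * x))]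
  calc 4 * exp (4 * (x / 8)) ≤ ε / 2 * exp x * (1 / x) := by
        rw [mul_one_div, le_div_iff₀ hx0]
        exact hmul
    _ ≤ ε / 2 * (exp x * (log x / x)) := by
        rw [mul_assoc]
        gcongr

lemma eventually_one_le_L : ∀ᶠ t in atTop, 1 ≤ L t := by
  filter_upwards [(tendsto_log_atTop.comp tendsto_log_atTop).eventually (eventually_ge_atTop 1),
    eventually_ge_atTop 1] with t (hx : 1 ≤ log (log t)) ht
  exact one_le_exp (mul_nonneg (log_nonneg ht) (div_nonneg (log_nonneg hx) (by linarith)))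

lemma eventually_card_radTotientFiber_le {ε : ℝ} (hε : 0 < ε) (hε2 : ε ≤ 2) :
    ∀ᶠ t in atTop, ∀ c : ℕ, (#(radTotientFiber t c) : ℝ) ≤ t * L t ^ (-(1 - ε)) := by
  have hx : Tendsto (fun t => log (log t)) atTop atTop := tendsto_log_atTop.comp tendsto_log_atTop
  filter_upwards [hx.eventually ((eventually_half_le_rankinExponent hε.le).and
      ((eventually_sum_rpow_neg_rankinExponent_le hε hε2).and (eventually_four_mul_exp_le hε))),
    eventually_gt_atTop 1] with t ⟨hσ, hsum, hexp⟩ ht c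
  set x := log (log t)
  have hxt : exp x = log t := exp_log (log_pos ht)
  rcases (radTotientFiber t c).eq_empty_or_nonempty with hD | ⟨d, hd⟩
  · rw [hD, card_empty, Nat.cast_zero]
    exact mul_nonneg (by linarith) (rpow_nonneg (exp_pos _).le _)
  have hc : c ≠ 0 := (mem_filter.mp hd).2 ▸ rad_ne_zero _
  have hcard : (#c.primeFactors : ℝ) ≤ 2 * exp x :=
    hxt ▸ card_primeFactors_le_two_mul_log hc (cast_le_of_mem_radTotientFiber hd)
  calc (#(radTotientFiber t c) : ℝ)
      ≤ t ^ rankinExponent ε x *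
        exp (4 * exp (4 * ∑ p ∈ c.primeFactors, (p : ℝ) ^ (-rankinExponent ε x))) :=
        card_radTotientFiber_le (by linarith) hσ hc
    _ ≤ t ^ rankinExponent ε x * exp (ε / 2 * (exp x * (log x / x))) := by
        have hS := hsum _ (fun p hp => Nat.prime_of_mem_primeFactors hp) hcard
        gcongr _ * exp ?_
        exact le_trans (by gcongr) hexp
    _ = t * L t ^ (-(1 - ε)) := by rw [hxt]; exact rpow_rankinExponent_mul_exp (by linarith) ε

end RadTotient

theorem rad_totient_fiber_count_uniform :
    ∀ ε : ℝ, 0 < ε → ∃ t₀ : ℝ, ∀ t : ℝ, t₀ ≤ t → ∀ c : ℕ, 0 < c →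
      ((((Finset.Icc 1 ⌊t⌋₊).filter (fun d => rad d.totient = c)).card : ℝ))
        ≤ t * (L t) ^ (-(1 - ε)) := by
  intro ε hε
  obtain ⟨t₀, ht₀⟩ := Filter.eventually_atTop.mp
    ((RadTotient.eventually_card_radTotientFiber_le (lt_min hε two_pos) (min_le_right ε 2)).and
      (RadTotient.eventually_one_le_L.and (Filter.eventually_ge_atTop 0)))
  refine ⟨t₀, fun t ht c _ => ?_⟩
  obtain ⟨hcard, hL, ht0⟩ := ht₀ t ht
  calc _ ≤ t * L t ^ (-(1 - min ε 2)) := hcard c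
    _ ≤ t * L t ^ (-(1 - ε)) := by
        gcongr
        exact min_le_left ε 2
end

section
/- If n is a positive integer with rad(φ(n)) ∣ n − 1, and p is a prime dividing n with n = m·p, then m ≡ 1 (mod rad(p − 1)). -/
/-! Since `p - 1 = φ p` divides `φ n`, its radical divides `rad (φ n)`, hence `n - 1`.
So modulo `rad (p - 1)` both `p` and `n = m * p` are `1`, and cancelling `p` gives `m ≡ 1`. -/

open Finset

theorem rad_dvd_self (n : ℕ) : rad n ∣ n :=
  Nat.prod_primeFactors_dvd n

theorem rad_dvd_rad_of_dvd {a b : ℕ} (h : a ∣ b) (hb : b ≠ 0) : rad a ∣ rad b :=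
  prod_dvd_prod_of_subset _ _ _ (Nat.primeFactors_mono h hb)

theorem Nat.Prime.sub_one_dvd_totient_of_dvd {p n : ℕ} (hp : p.Prime) (h : p ∣ n) :
    p - 1 ∣ n.totient :=
  Nat.totient_prime hp ▸ Nat.totient_dvd_of_dvd h

theorem Nat.ModEq.modEq_one_of_mul {m p r : ℕ} (hp : p ≡ 1 [MOD r]) (hmp : m * p ≡ 1 [MOD r]) :
    m ≡ 1 [MOD r] :=
  calc m = m * 1 := (mul_one m).symm
    _ ≡ m * p [MOD r] := hp.symm.mul_left m
    _ ≡ 1 [MOD r] := hmp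

theorem cofactor_congruent_one_general
    (n m p : ℕ) (hn : 0 < n) (hdvd : rad n.totient ∣ n - 1)
    (hp : p.Prime) (hnmp : n = m * p) :
    m ≡ 1 [MOD rad (p - 1)] := by
  have hrad : rad (p - 1) ∣ rad n.totient :=
    rad_dvd_rad_of_dvd (hp.sub_one_dvd_totient_of_dvd (Dvd.intro_left m hnmp.symm))
      (Nat.totient_pos.mpr hn).ne'
  have hp_one : p ≡ 1 [MOD rad (p - 1)] :=
    ((Nat.modEq_iff_dvd' hp.one_le).mpr (rad_dvd_self _)).symm
  have hn_one : n ≡ 1 [MOD rad (p - 1)] :=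
    ((Nat.modEq_iff_dvd' hn).mpr (hrad.trans hdvd)).symm
  exact hp_one.modEq_one_of_mul (hnmp ▸ hn_one)

theorem cofactor_congruent_one
    (n m p : ℕ) (hn : 0 < n) (hdvd : rad n.totient ∣ n - 1)
    (hp : p.Prime) (hpn : p ∣ n) (hnmp : n = m * p) :
    m ≡ 1 [MOD rad (p - 1)] :=
  cofactor_congruent_one_general n m p hn hdvd hp hnmp
end

section
/- If n is a composite positive integer with rad(φ(n)) ∣ n − 1 and d is a divisor of n, then gcd(d, rad(φ(d))) = 1 and n ≡ 1 (mod rad(φ(d))). -/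
open Finset

theorem divisor_coprime_and_congruence
    (n d : ℕ) (hn : 1 < n) (hcomp : ¬ n.Prime)
    (hdvd : rad n.totient ∣ n - 1) (hd : d ∣ n) :
    Nat.gcd d (rad d.totient) = 1 ∧ n ≡ 1 [MOD rad d.totient] := by
  have hn0 : 0 < n := lt_trans one_pos hn
  have htot : d.totient ∣ n.totient := Nat.totient_dvd_of_dvd hd
  have hne : n.totient ≠ 0 := (Nat.totient_pos.mpr hn0).ne'
  have hradd : rad d.totient ∣ rad n.totient :=
    Finset.prod_dvd_prod_of_subset _ _ _ (Nat.primeFactors_mono htot hne)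
  have h1 : rad d.totient ∣ n - 1 := hradd.trans hdvd
  constructor
  · have hg1 : Nat.gcd d (rad d.totient) ∣ n := (Nat.gcd_dvd_left _ _).trans hd
    have hg2 : Nat.gcd d (rad d.totient) ∣ n - 1 := (Nat.gcd_dvd_right _ _).trans h1
    have : Nat.gcd d (rad d.totient) ∣ n - (n - 1) := Nat.dvd_sub hg1 hg2
    have hsub : n - (n - 1) = 1 := by omega
    rw [hsub] at this
    exact Nat.eq_one_of_dvd_one this
  · exact (Nat.modEq_iff_dvd' (le_of_lt hn)).mpr h1 |>.symm
end

section
/- For distinct primes p and q, rad(φ(pq)) divides pq − 1 if and only if rad(p − 1) = rad(q − 1). -/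
/-!
Write `a = p - 1` and `b = q - 1`. Then `φ(pq) = ab` and `pq - 1 = ab + a + b`, so a prime `r ∣ ab`
divides `pq - 1` exactly when it divides `a + b`. Since `r` divides one of `a`, `b`, this happens
exactly when it divides both; hence `rad(ab) ∣ ab + a + b` says that `a` and `b` have the same prime
factors, i.e. the same radical.
-/

open Finset

lemma rad_dvd_iff {n m : ℕ} : rad n ∣ m ↔ ∀ r ∈ n.primeFactors, r ∣ m :=
  ⟨fun h _ hr ↦ (dvd_prod_of_mem _ hr).trans h,
    prod_primes_dvd m (fun _ hr ↦ (Nat.prime_of_mem_primeFactors hr).prime)⟩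

lemma rad_eq_rad_iff {a b : ℕ} : rad a = rad b ↔ a.primeFactors = b.primeFactors := by
  refine ⟨fun h ↦ ?_, fun h ↦ by rw [rad, rad, h]⟩
  rw [← Nat.primeFactors_prod_primeFactors a, ← Nat.primeFactors_prod_primeFactors b]
  exact congrArg Nat.primeFactors h

lemma primeFactors_subset_of_rad_mul_dvd {a b : ℕ} (ha : a ≠ 0) (hb : b ≠ 0)
    (h : rad (a * b) ∣ a * b + a + b) : a.primeFactors ⊆ b.primeFactors := by
  intro r hr
  obtain ⟨hr_prime, hra, -⟩ := Nat.mem_primeFactors.mp hr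
  have hr_ab : r ∈ (a * b).primeFactors :=
    Nat.mem_primeFactors.mpr ⟨hr_prime, hra.mul_right b, mul_ne_zero ha hb⟩
  have hr_sum : r ∣ a * b + a + b := rad_dvd_iff.mp h r hr_ab
  have hrb : r ∣ b := (Nat.dvd_add_right ((hra.mul_right b).add hra)).mp hr_sum
  exact Nat.mem_primeFactors.mpr ⟨hr_prime, hrb, hb⟩

lemma rad_mul_dvd_mul_add_add_iff {a b : ℕ} (ha : a ≠ 0) (hb : b ≠ 0) :
    rad (a * b) ∣ a * b + a + b ↔ rad a = rad b := by
  rw [rad_eq_rad_iff]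
  refine ⟨fun h ↦ (primeFactors_subset_of_rad_mul_dvd ha hb h).antisymm ?_, fun h ↦ ?_⟩
  · refine primeFactors_subset_of_rad_mul_dvd hb ha ?_
    rwa [mul_comm b, add_right_comm]
  · refine rad_dvd_iff.mpr fun r hr ↦ ?_
    obtain ⟨hr_prime, hr_ab, -⟩ := Nat.mem_primeFactors.mp hr
    have hr_a_iff_b : r ∣ a ↔ r ∣ b := by
      simpa [Nat.mem_primeFactors, hr_prime, ha, hb] using Finset.ext_iff.mp h r
    have hra_hrb : r ∣ a ∧ r ∣ b := by
      rcases hr_prime.dvd_mul.mp hr_ab with hra | hrb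
      · exact ⟨hra, hr_a_iff_b.mp hra⟩
      · exact ⟨hr_a_iff_b.mpr hrb, hrb⟩
    exact (hr_ab.add hra_hrb.1).add hra_hrb.2

lemma totient_mul_of_prime_of_ne {p q : ℕ} (hp : p.Prime) (hq : q.Prime) (hpq : p ≠ q) :
    (p * q).totient = (p - 1) * (q - 1) := by
  rw [Nat.totient_mul ((Nat.coprime_primes hp hq).mpr hpq), Nat.totient_prime hp,
    Nat.totient_prime hq]

lemma mul_sub_one_eq {p q : ℕ} (hp : p ≠ 0) (hq : q ≠ 0) :
    p * q - 1 = (p - 1) * (q - 1) + (p - 1) + (q - 1) := by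
  obtain ⟨a, rfl⟩ := Nat.exists_eq_succ_of_ne_zero hp
  obtain ⟨b, rfl⟩ := Nat.exists_eq_succ_of_ne_zero hq
  simp only [Nat.succ_sub_one, Nat.succ_mul, Nat.mul_succ]
  omega

theorem rad_totient_dvd_iff_rad_eq
    (p q : ℕ) (hp : p.Prime) (hq : q.Prime) (hpq : p ≠ q) :
    rad (p * q).totient ∣ p * q - 1 ↔ rad (p - 1) = rad (q - 1) := by
  rw [totient_mul_of_prime_of_ne hp hq hpq, mul_sub_one_eq hp.ne_zero hq.ne_zero]
  exact rad_mul_dvd_mul_add_add_iff (Nat.sub_ne_zero_of_lt hp.one_lt)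
    (Nat.sub_ne_zero_of_lt hq.one_lt)
end

section
/- There exist constants C and x₀ such that for all x ≥ x₀, the number of ordered pairs (m, n) of positive integers with m·n ≤ x and rad(m) = rad(n) is at most x^{1/2} · exp( (2·(2 log x)^{1/2} / log log x) · (1 + C/ log log x) ). -/
open Finset

/-!
Rankin's trick: each counted pair has `1 ≤ √(x / (m n))`, so the count is at most `√x` times the
sum of `(m n)^(-1/2)` over the pairs. As `rad m = rad n` makes the exponents of every prime in `m`
and `n` vanish together, this sum is dominated by the Euler product
`∏_{p ≤ x} (1 + (∑_{e ≥ 1} p^(-e/2))²) ≤ ∏_{p ≤ x} (1 + 16/p) ≤ exp (16 ∑_{p ≤ x} 1/p)`.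
Chebyshev's bound `∏_{p ≤ n} p ≤ 4ⁿ`, applied to dyadic blocks, gives
`∑_{p ≤ x} 1/p ≤ 24 + 8 log log x`. Hence the count is `√x (log x)^O(1)`, which is below the
claimed bound already for `C = 0`.
-/

open Real Filter

lemma Nat.mem_primesLE_sdiff {p a b : ℕ} :
    p ∈ Nat.primesLE b \ Nat.primesLE a ↔ a < p ∧ p ≤ b ∧ p.Prime := by
  simp only [Finset.mem_sdiff, Nat.mem_primesLE]
  constructor
  · rintro ⟨⟨hb, hp⟩, ha⟩
    exact ⟨not_le.mp fun h => ha ⟨h, hp⟩, hb, hp⟩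
  · rintro ⟨ha, hb, hp⟩
    exact ⟨⟨hb, hp⟩, fun h => (not_le.mpr ha) h.1⟩

theorem card_primesLE_two_pow_sdiff_mul_le (k : ℕ) :
    #(Nat.primesLE (2 ^ (k + 1)) \ Nat.primesLE (2 ^ k)) * (k + 1) ≤ 2 ^ (k + 3) := by
  set s := Nat.primesLE (2 ^ (k + 1)) \ Nat.primesLE (2 ^ k)
  have hcard : #s ≤ 2 ^ k := by
    have hsub : s ⊆ Ioc (2 ^ k) (2 ^ (k + 1)) := fun p hp =>
      mem_Ioc.mpr ⟨(Nat.mem_primesLE_sdiff.mp hp).1, (Nat.mem_primesLE_sdiff.mp hp).2.1⟩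
    have := card_le_card hsub
    rw [Nat.card_Ioc, pow_succ] at this
    omega
  have hmul : 2 ^ (k * #s) ≤ 2 ^ (2 ^ (k + 2)) :=
    calc 2 ^ (k * #s) = (2 ^ k) ^ #s := pow_mul 2 k #s
      _ ≤ ∏ p ∈ s, p := pow_card_le_prod _ _ _ fun p hp => (Nat.mem_primesLE_sdiff.mp hp).1.le
      _ ≤ ∏ p ∈ Nat.primesLE (2 ^ (k + 1)), p :=
        prod_le_prod_of_subset_of_one_le' sdiff_subset
          fun p hp _ => (Nat.prime_of_mem_primesLE hp).one_le
      _ ≤ 4 ^ 2 ^ (k + 1) := primorial_le_four_pow _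
      _ = 2 ^ (2 ^ (k + 2)) := by rw [show (4 : ℕ) = 2 ^ 2 from rfl, ← pow_mul]; ring_nf
  have hks : k * #s ≤ 2 ^ (k + 2) := (Nat.pow_le_pow_iff_right one_lt_two).mp hmul
  calc #s * (k + 1) = k * #s + #s := by ring
    _ ≤ 4 * 2 ^ k + 2 ^ k := add_le_add (hks.trans_eq (by ring)) hcard
    _ ≤ 2 ^ (k + 3) := by rw [pow_add]; omega

theorem sum_inv_primesLE_two_pow_sdiff_le (k : ℕ) :
    ∑ p ∈ Nat.primesLE (2 ^ (k + 1)) \ Nat.primesLE (2 ^ k), (p : ℝ)⁻¹ ≤ 8 / (k + 1) := by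
  set s := Nat.primesLE (2 ^ (k + 1)) \ Nat.primesLE (2 ^ k)
  have hcard : (#s : ℝ) * (k + 1) ≤ 2 ^ k * 8 := by
    exact_mod_cast (card_primesLE_two_pow_sdiff_mul_le k).trans_eq (by ring)
  calc ∑ p ∈ s, (p : ℝ)⁻¹ ≤ ∑ _p ∈ s, ((2 : ℝ) ^ k)⁻¹ :=
        sum_le_sum fun p hp => inv_anti₀ (by positivity)
          (by exact_mod_cast (Nat.mem_primesLE_sdiff.mp hp).1.le)
    _ = #s / 2 ^ k := by rw [sum_const, nsmul_eq_mul, div_eq_mul_inv]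
    _ ≤ 8 / (k + 1) := by
        rw [div_le_div_iff₀ (by positivity) (by positivity)]
        linarith

theorem sum_inv_primesLE_two_pow_le (K : ℕ) :
    ∑ p ∈ Nat.primesLE (2 ^ K), (p : ℝ)⁻¹ ≤ 8 * harmonic K := by
  induction K with
  | zero => simp
  | succ K ih =>
    have hsub : Nat.primesLE (2 ^ K) ⊆ Nat.primesLE (2 ^ (K + 1)) :=
      Nat.primesLE_mono (Nat.pow_le_pow_right two_pos K.le_succ)
    rw [← sum_sdiff hsub, harmonic_succ]
    have hblock := sum_inv_primesLE_two_pow_sdiff_le K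
    rw [div_eq_mul_inv] at hblock
    push_cast
    linarith

lemma natLog_two_add_one_le_three_mul_log {N : ℕ} (hN : 2 ≤ N) :
    (Nat.log 2 N + 1 : ℝ) ≤ 3 * log N := by
  have hlog2 : 2 / 3 < log 2 := by linarith [log_two_gt_d9]
  have hlogN : log 2 ≤ log N := log_le_log two_pos (by exact_mod_cast hN)
  have h : (Nat.log 2 N : ℝ) * log 2 ≤ log N := by
    have := natLog_le_logb N 2
    rwa [logb, le_div_iff₀ (by positivity)] at this
  nlinarith

theorem sum_inv_primesLE_le {N : ℕ} (hN : 2 ≤ N) :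
    ∑ p ∈ Nat.primesLE N, (p : ℝ)⁻¹ ≤ 24 + 8 * log (log N) := by
  set K := Nat.log 2 N + 1
  have hK : (K : ℝ) ≤ 3 * log N := by exact_mod_cast natLog_two_add_one_le_three_mul_log hN
  have hlogN : 0 < log N := log_pos (by exact_mod_cast hN)
  have hlogK : log K ≤ 2 + log (log N) :=
    calc log K ≤ log (3 * log N) := log_le_log (by positivity) hK
      _ = log 3 + log (log N) := log_mul (by norm_num) hlogN.ne'
      _ ≤ 2 + log (log N) := by linarith [log_le_sub_one_of_pos (show (0 : ℝ) < 3 by norm_num)]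
  calc ∑ p ∈ Nat.primesLE N, (p : ℝ)⁻¹ ≤ ∑ p ∈ Nat.primesLE (2 ^ K), (p : ℝ)⁻¹ :=
        sum_le_sum_of_subset_of_nonneg
          (Nat.primesLE_mono (Nat.lt_pow_succ_log_self one_lt_two N).le) fun _ _ _ => by positivity
    _ ≤ 8 * harmonic K := sum_inv_primesLE_two_pow_le K
    _ ≤ 8 * (1 + log K) := by gcongr; exact harmonic_le_one_add_log K
    _ ≤ 24 + 8 * log (log N) := by linarith

lemma card_le_sqrt_mul_sum_inv_sqrt {α : Type*} {s : Finset α} {g : α → ℝ} {x : ℝ}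
    (hg : ∀ a ∈ s, 0 < g a ∧ g a ≤ x) : (#s : ℝ) ≤ √x * ∑ a ∈ s, (√(g a))⁻¹ := by
  rw [card_eq_sum_ones, Nat.cast_sum, mul_sum]
  refine sum_le_sum fun a ha => ?_
  obtain ⟨hpos, hle⟩ := hg a ha
  rw [Nat.cast_one, ← div_eq_mul_inv, one_le_div (Real.sqrt_pos.mpr hpos)]
  exact Real.sqrt_le_sqrt hle

lemma Nat.prod_pow_factorization_of_primeFactors_subset {m : ℕ} {P : Finset ℕ} (hm : m ≠ 0)
    (hP : m.primeFactors ⊆ P) : ∏ p ∈ P, p ^ m.factorization p = m := by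
  conv_rhs => rw [Nat.prod_primeFactors_pow_factorization hm]
  refine (prod_subset hP fun p _ hp => ?_).symm
  rw [← Nat.support_factorization, Finsupp.notMem_support_iff] at hp
  rw [hp, pow_zero]

theorem sum_mul_le_prod_sum_pow_mul_pow (f : ℕ →* ℝ) (hf : ∀ n, 0 ≤ f n)
    {S T : Finset (ℕ × ℕ)} {P : Finset ℕ}
    (hS : ∀ mn ∈ S, mn.1 ≠ 0 ∧ mn.2 ≠ 0 ∧ mn.1.primeFactors ⊆ P ∧ mn.2.primeFactors ⊆ P)
    (hT : ∀ mn ∈ S, ∀ p ∈ P, (mn.1.factorization p, mn.2.factorization p) ∈ T) :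
    ∑ mn ∈ S, f mn.1 * f mn.2 ≤ ∏ p ∈ P, ∑ ef ∈ T, f p ^ ef.1 * f p ^ ef.2 := by
  classical
  let g : ℕ → ℕ × ℕ → ℝ := fun p ef => f p ^ ef.1 * f p ^ ef.2
  let Φ : ℕ × ℕ → (∀ p ∈ P, ℕ × ℕ) :=
    fun mn p _ => (mn.1.factorization p, mn.2.factorization p)
  have hΦ : ∀ mn ∈ S, f mn.1 * f mn.2 = ∏ x ∈ P.attach, g x.1 (Φ mn x.1 x.2) := by
    intro mn hmn
    obtain ⟨hm, hn, hmP, hnP⟩ := hS mn hmn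
    rw [prod_attach P fun p => g p (mn.1.factorization p, mn.2.factorization p)]
    conv_lhs => rw [← Nat.prod_pow_factorization_of_primeFactors_subset hm hmP,
      ← Nat.prod_pow_factorization_of_primeFactors_subset hn hnP]
    simp only [map_prod, map_pow, ← prod_mul_distrib, g]
  have hinj : Set.InjOn Φ S := by
    intro mn hmn mn' hmn' h
    obtain ⟨hm, hn, hmP, hnP⟩ := hS mn hmn
    obtain ⟨hm', hn', hmP', hnP'⟩ := hS mn' hmn'
    have hfac : ∀ p ∈ P, mn.1.factorization p = mn'.1.factorization p ∧
        mn.2.factorization p = mn'.2.factorization p := fun p hp =>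
      Prod.ext_iff.mp (congrFun (congrFun h p) hp)
    refine Prod.ext ?_ ?_
    · rw [← Nat.prod_pow_factorization_of_primeFactors_subset hm hmP,
        ← Nat.prod_pow_factorization_of_primeFactors_subset hm' hmP']
      exact prod_congr rfl fun p hp => by rw [(hfac p hp).1]
    · rw [← Nat.prod_pow_factorization_of_primeFactors_subset hn hnP,
        ← Nat.prod_pow_factorization_of_primeFactors_subset hn' hnP']
      exact prod_congr rfl fun p hp => by rw [(hfac p hp).2]
  have hmaps : ∀ mn ∈ S, Φ mn ∈ P.pi fun _ => T := fun mn hmn =>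
    mem_pi.mpr fun p hp => hT mn hmn p hp
  calc ∑ mn ∈ S, f mn.1 * f mn.2 = ∑ mn ∈ S, ∏ x ∈ P.attach, g x.1 (Φ mn x.1 x.2) :=
        sum_congr rfl hΦ
    _ = ∑ φ ∈ S.image Φ, ∏ x ∈ P.attach, g x.1 (φ x.1 x.2) := by rw [sum_image hinj]
    _ ≤ ∑ φ ∈ P.pi fun _ => T, ∏ x ∈ P.attach, g x.1 (φ x.1 x.2) :=
        sum_le_sum_of_subset_of_nonneg (image_subset_iff.mpr hmaps) fun _ _ _ =>
          prod_nonneg fun _ _ => mul_nonneg (pow_nonneg (hf _) _) (pow_nonneg (hf _) _)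
    _ = ∏ p ∈ P, ∑ ef ∈ T, g p ef := (prod_sum P (fun _ => T) g).symm

lemma primeFactors_rad (n : ℕ) : (rad n).primeFactors = n.primeFactors :=
  Nat.primeFactors_prod fun _ hp => Nat.prime_of_mem_primeFactors hp

lemma primeFactors_eq_of_rad_eq {m n : ℕ} (h : rad m = rad n) :
    m.primeFactors = n.primeFactors := by
  rw [← primeFactors_rad m, ← primeFactors_rad n, h]

def exponentPairs (X : ℕ) : Finset (ℕ × ℕ) := insert (0, 0) (Icc 1 X ×ˢ Icc 1 X)

lemma factorization_mem_exponentPairs {m n X : ℕ} (p : ℕ) (hm : m ≠ 0) (hn : n ≠ 0)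
    (hmX : m ≤ X) (hnX : n ≤ X) (h : m.primeFactors = n.primeFactors) :
    (m.factorization p, n.factorization p) ∈ exponentPairs X := by
  have hlt := (Nat.factorization_lt p hm).trans_le hmX
  have hlt' := (Nat.factorization_lt p hn).trans_le hnX
  by_cases hp : p ∈ m.primeFactors
  · have hp' : p ∈ n.primeFactors := h ▸ hp
    rw [← Nat.support_factorization, Finsupp.mem_support_iff] at hp hp'
    refine mem_insert_of_mem (mem_product.mpr ⟨mem_Icc.mpr ⟨?_, ?_⟩, mem_Icc.mpr ⟨?_, ?_⟩⟩) <;>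
      omega
  · have hp' : p ∉ n.primeFactors := h ▸ hp
    rw [← Nat.support_factorization, Finsupp.notMem_support_iff] at hp hp'
    simp [exponentPairs, hp, hp']

lemma sum_exponentPairs_pow_mul_pow (q : ℝ) (X : ℕ) :
    ∑ ef ∈ exponentPairs X, q ^ ef.1 * q ^ ef.2 = 1 + (∑ e ∈ Icc 1 X, q ^ e) ^ 2 := by
  rw [exponentPairs, sum_insert (by simp), sum_product, sq, sum_mul_sum]
  simp

lemma sq_geom_sum_Icc_le {q : ℝ} (hq0 : 0 ≤ q) (hq : q ≤ 3 / 4) (X : ℕ) :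
    (∑ e ∈ Icc 1 X, q ^ e) ^ 2 ≤ 16 * q ^ 2 := by
  have hgeom : ∑ e ∈ Icc 1 X, q ^ e ≤ 4 * q :=
    calc ∑ e ∈ Icc 1 X, q ^ e = ∑ e ∈ Ico 1 (X + 1), q ^ e := by rw [Ico_add_one_right_eq_Icc]
      _ ≤ q ^ 1 / (1 - q) := geom_sum_Ico_le_of_lt_one hq0 (by linarith)
      _ ≤ 4 * q := by rw [pow_one, div_le_iff₀ (by linarith)]; nlinarith
  calc (∑ e ∈ Icc 1 X, q ^ e) ^ 2 ≤ (4 * q) ^ 2 :=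
        pow_le_pow_left₀ (sum_nonneg fun _ _ => pow_nonneg hq0 _) hgeom 2
    _ = 16 * q ^ 2 := by ring

noncomputable def invSqrt : ℕ →* ℝ where
  toFun n := (√(n : ℝ))⁻¹
  map_one' := by simp
  map_mul' a b := by push_cast; rw [Real.sqrt_mul (Nat.cast_nonneg a), mul_inv]

lemma invSqrt_apply (n : ℕ) : invSqrt n = (√(n : ℝ))⁻¹ := rfl

lemma invSqrt_nonneg (n : ℕ) : 0 ≤ invSqrt n := inv_nonneg.mpr (Real.sqrt_nonneg _)

lemma sum_exponentPairs_invSqrt_le {p : ℕ} (hp : 2 ≤ p) (X : ℕ) :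
    ∑ ef ∈ exponentPairs X, invSqrt p ^ ef.1 * invSqrt p ^ ef.2 ≤ exp (16 / p) := by
  have hp' : (2 : ℝ) ≤ p := by exact_mod_cast hp
  have hsq : invSqrt p ^ 2 = (p : ℝ)⁻¹ := by
    rw [invSqrt_apply, inv_pow, Real.sq_sqrt (Nat.cast_nonneg p)]
  have hle : invSqrt p ≤ 3 / 4 := by
    refine abs_le_of_sq_le_sq' ?_ (by norm_num) |>.2
    rw [hsq]
    calc (p : ℝ)⁻¹ ≤ 2⁻¹ := inv_anti₀ two_pos hp'
      _ ≤ (3 / 4) ^ 2 := by norm_num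
  calc ∑ ef ∈ exponentPairs X, invSqrt p ^ ef.1 * invSqrt p ^ ef.2
      = 1 + (∑ e ∈ Icc 1 X, invSqrt p ^ e) ^ 2 := sum_exponentPairs_pow_mul_pow _ X
    _ ≤ 1 + 16 / p := by
        rw [div_eq_mul_inv, ← hsq]
        linarith [sq_geom_sum_Icc_le (invSqrt_nonneg p) hle X]
    _ ≤ exp (16 / p) := by linarith [add_one_le_exp (16 / (p : ℝ))]

lemma prod_sum_exponentPairs_invSqrt_le (X : ℕ) :
    ∏ p ∈ Nat.primesLE X, ∑ ef ∈ exponentPairs X, invSqrt p ^ ef.1 * invSqrt p ^ ef.2 ≤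
      exp (16 * ∑ p ∈ Nat.primesLE X, (p : ℝ)⁻¹) :=
  calc _ ≤ ∏ p ∈ Nat.primesLE X, exp (16 / p) :=
        prod_le_prod (fun _ _ => sum_nonneg fun _ _ =>
            mul_nonneg (pow_nonneg (invSqrt_nonneg _) _) (pow_nonneg (invSqrt_nonneg _) _))
          fun p hp => sum_exponentPairs_invSqrt_le (Nat.prime_of_mem_primesLE hp).two_le X
    _ = exp (16 * ∑ p ∈ Nat.primesLE X, (p : ℝ)⁻¹) := by
        rw [← exp_sum, mul_sum]
        simp only [div_eq_mul_inv]

theorem eventually_add_mul_log_le_sqrt_div_log (a b : ℝ) :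
    ∀ᶠ u in atTop, a + b * log u ≤ 2 * (2 * u) ^ ((1 : ℝ) / 2) / log u := by
  set c := |a| + |b| + 1
  have hc : 0 < c := by positivity
  filter_upwards [tendsto_log_atTop.eventually_ge_atTop 1,
    (isLittleO_log_rpow_rpow_atTop 2 (by norm_num : (0 : ℝ) < 1 / 2)).bound (div_pos two_pos hc),
    eventually_ge_atTop 0] with u hlog hbound hu
  have hlog0 : 0 < log u := by linarith
  rw [Real.norm_of_nonneg (by positivity), Real.norm_of_nonneg (by positivity),
    rpow_two] at hbound
  have hsqrt : u ^ ((1 : ℝ) / 2) ≤ (2 * u) ^ ((1 : ℝ) / 2) :=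
    rpow_le_rpow hu (by linarith) (by norm_num)
  have hab : a + b * log u ≤ c * log u := by
    nlinarith [le_abs_self a, le_abs_self b, abs_nonneg a, abs_nonneg b]
  rw [le_div_iff₀ hlog0]
  calc (a + b * log u) * log u ≤ c * log u ^ 2 := by nlinarith
    _ ≤ c * (2 / c * u ^ ((1 : ℝ) / 2)) := by gcongr
    _ = 2 * u ^ ((1 : ℝ) / 2) := by field_simp
    _ ≤ 2 * (2 * u) ^ ((1 : ℝ) / 2) := by gcongr

theorem card_equal_radical_pairs_le {x : ℝ} (hx : 2 ≤ x) :
    ((((Finset.Icc 1 ⌊x⌋₊ ×ˢ Finset.Icc 1 ⌊x⌋₊).filter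
        (fun mn : ℕ × ℕ => (mn.1 * mn.2 : ℝ) ≤ x ∧ rad mn.1 = rad mn.2)).card : ℝ))
      ≤ √x * exp (384 + 128 * log (log x)) := by
  set X := ⌊x⌋₊
  have hX : 2 ≤ X := Nat.le_floor (by exact_mod_cast hx)
  have hXx : (X : ℝ) ≤ x := Nat.floor_le (by linarith)
  set S := (Icc 1 X ×ˢ Icc 1 X).filter
    (fun mn : ℕ × ℕ => (mn.1 * mn.2 : ℝ) ≤ x ∧ rad mn.1 = rad mn.2)
  have hS : ∀ mn ∈ S, (mn.1 ≠ 0 ∧ mn.1 ≤ X) ∧ (mn.2 ≠ 0 ∧ mn.2 ≤ X) ∧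
      (mn.1 * mn.2 : ℝ) ≤ x ∧ rad mn.1 = rad mn.2 := by
    intro mn hmn
    simp only [S, mem_filter, mem_product, mem_Icc] at hmn
    exact ⟨⟨by omega, hmn.1.1.2⟩, ⟨by omega, hmn.1.2.2⟩, hmn.2⟩
  have hrankin : (#S : ℝ) ≤ √x * ∑ mn ∈ S, invSqrt mn.1 * invSqrt mn.2 := by
    have := card_le_sqrt_mul_sum_inv_sqrt (s := S) (g := fun mn => (mn.1 * mn.2 : ℝ))
      fun mn hmn => by
        obtain ⟨⟨hm, -⟩, ⟨hn, -⟩, hle, -⟩ := hS mn hmn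
        exact ⟨by positivity, hle⟩
    simpa only [invSqrt_apply, Real.sqrt_mul (Nat.cast_nonneg _), mul_inv] using this
  have hsubset : ∀ {m}, m ≤ X → m.primeFactors ⊆ Nat.primesLE X := fun hm p hp =>
    Nat.mem_primesLE.mpr
      ⟨(Nat.le_of_mem_primeFactors hp).trans hm, Nat.prime_of_mem_primeFactors hp⟩
  have heuler := sum_mul_le_prod_sum_pow_mul_pow invSqrt invSqrt_nonneg (S := S)
    (P := Nat.primesLE X) (T := exponentPairs X)
    (fun mn hmn => by
      obtain ⟨⟨hm, hmX⟩, ⟨hn, hnX⟩, -, -⟩ := hS mn hmn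
      exact ⟨hm, hn, hsubset hmX, hsubset hnX⟩)
    fun mn hmn p _ => by
      obtain ⟨⟨hm, hmX⟩, ⟨hn, hnX⟩, -, hrad⟩ := hS mn hmn
      exact factorization_mem_exponentPairs p hm hn hmX hnX (primeFactors_eq_of_rad_eq hrad)
  have hmertens : 16 * ∑ p ∈ Nat.primesLE X, (p : ℝ)⁻¹ ≤ 384 + 128 * log (log x) := by
    have hlog : log (log X) ≤ log (log x) :=
      log_le_log (log_pos (by exact_mod_cast hX)) (log_le_log (by positivity) hXx)
    linarith [sum_inv_primesLE_le hX]
  calc (#S : ℝ) ≤ √x * ∑ mn ∈ S, invSqrt mn.1 * invSqrt mn.2 := hrankin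
    _ ≤ √x * exp (16 * ∑ p ∈ Nat.primesLE X, (p : ℝ)⁻¹) := by
        gcongr
        exact heuler.trans (prod_sum_exponentPairs_invSqrt_le X)
    _ ≤ √x * exp (384 + 128 * log (log x)) := by gcongr

theorem equal_radical_pairs_bound :
    ∃ C : ℝ, ∃ x₀ : ℝ, ∀ x : ℝ, x₀ ≤ x →
      ((((Finset.Icc 1 ⌊x⌋₊ ×ˢ Finset.Icc 1 ⌊x⌋₊).filter
        (fun mn : ℕ × ℕ => (mn.1 * mn.2 : ℝ) ≤ x ∧ rad mn.1 = rad mn.2)).card : ℝ))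
        ≤ x ^ ((1 : ℝ) / 2) *
          Real.exp ((2 * (2 * Real.log x) ^ ((1 : ℝ) / 2) / Real.log (Real.log x)) *
            (1 + C / Real.log (Real.log x))) := by
  obtain ⟨x₀, hx₀⟩ := eventually_atTop.mp ((eventually_ge_atTop 2).and
    (tendsto_log_atTop.eventually (eventually_add_mul_log_le_sqrt_div_log 384 128)))
  refine ⟨0, x₀, fun x hx => ?_⟩
  obtain ⟨hx2, hexponent⟩ := hx₀ x hx
  rw [zero_div, add_zero, mul_one, ← Real.sqrt_eq_rpow]
  exact (card_equal_radical_pairs_le hx2).trans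
    (mul_le_mul_of_nonneg_left (exp_le_exp.mpr hexponent) (sqrt_nonneg x))
end

section
/- For every integer k ≥ 2 there is a constant C_k such that for all real x ≥ 1, the number L_k(x) of composite integers n ≤ x satisfying φ(n) ∣ (n − 1)^k is at most C_k · x^{1 - 1/(4k - 1)}. -/
open Finset
open scoped Nat

/-!
A composite `n` with `φ n ∣ (n - 1) ^ k` is odd, and for each `d ∣ n` the number `n - 1` is
divisible by `e = dvdRoot k (φ d)`, the least `e` with `φ d ∣ e ^ k`, so that `φ d ≤ e ^ k`.
Put `r = 1 / (4k - 1)`, `Z = x ^ (k r)` and `A = x ^ (2 k r)`. At most `A` of the `n ≤ x` are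
`≤ A`. If `n` has a prime factor `p > Z`, then `n ≡ 0 (mod p)` and `n ≡ 1 (mod e)` with
`e ∣ p - 1`, `e ≥ (p - 1) ^ (1/k)` and `n ≠ p`, which leaves at most `x / (p e)` values of `n`;
summed over `p > Z` this is `O(k x Z ^ (-1/k))`. Otherwise `n > A` is `Z`-smooth, hence has a
divisor `d ∈ (A, A Z]`; since `d` is odd, `d ≤ φ(d) ^ 2 ≤ e ^ (2k)`, which leaves at most
`x / (d e) + 1` values of `n`, and these sum to `O(k x A ^ (-1/(2k)) + A Z)`. Both sums are
bounded by telescoping, using Bernoulli's inequality `(1 - 1/m) ^ s ≤ 1 - s/m` for `0 < s ≤ 1`.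
All three contributions are `O(x ^ (1 - r))`.
-/

noncomputable def dvdRoot (k D : ℕ) : ℕ := sInf {e | 0 < e ∧ D ∣ e ^ k}

-- The admissible `e` are closed under `gcd`, so the least one divides all of them.
theorem dvdRoot_dvd_of_dvd_pow {k D m : ℕ} (hm : 0 < m) (h : D ∣ m ^ k) : dvdRoot k D ∣ m := by
  obtain ⟨he, hDe⟩ : 0 < dvdRoot k D ∧ D ∣ dvdRoot k D ^ k :=
    Nat.sInf_mem (s := {e | 0 < e ∧ D ∣ e ^ k}) ⟨m, hm, h⟩
  have hgcd : Nat.gcd (dvdRoot k D) m = dvdRoot k D := by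
    refine le_antisymm (Nat.gcd_le_left _ he) (Nat.sInf_le ⟨Nat.gcd_pos_of_pos_right _ hm, ?_⟩)
    rw [← Nat.pow_gcd_pow]
    exact Nat.dvd_gcd hDe h
  exact hgcd ▸ Nat.gcd_dvd_right _ m

theorem dvdRoot_spec {k D : ℕ} (hk : k ≠ 0) (hD : 0 < D) :
    0 < dvdRoot k D ∧ D ∣ dvdRoot k D ^ k :=
  Nat.sInf_mem (s := {e | 0 < e ∧ D ∣ e ^ k}) ⟨D, hD, dvd_pow_self D hk⟩

theorem le_dvdRoot_pow {k D : ℕ} (hk : k ≠ 0) (hD : 0 < D) : D ≤ dvdRoot k D ^ k :=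
  Nat.le_of_dvd (pow_pos (dvdRoot_spec hk hD).1 k) (dvdRoot_spec hk hD).2

theorem dvdRoot_dvd {k D : ℕ} (hk : k ≠ 0) (hD : 0 < D) : dvdRoot k D ∣ D :=
  dvdRoot_dvd_of_dvd_pow hD (dvd_pow_self D hk)

theorem le_totient_sq_of_odd {d : ℕ} (hd : Odd d) : d ≤ φ d ^ 2 := by
  have hd0 : d ≠ 0 := by rintro rfl; simp at hd
  conv_lhs => rw [← Nat.prod_factorization_pow_eq_self hd0]
  rw [Nat.totient_eq_prod_factorization hd0, Finsupp.prod, Finsupp.prod, ← prod_pow]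
  refine prod_le_prod (fun _ _ => Nat.zero_le _) fun p hp => ?_
  have hpp : p.Prime := Nat.prime_of_mem_primeFactors hp
  have hp3 : 3 ≤ p := by
    rcases hpp.eq_two_or_odd' with rfl | hodd
    · exact absurd (Nat.dvd_of_mem_primeFactors hp)
        (Nat.not_even_iff_odd.mpr hd ∘ even_iff_two_dvd.mpr)
    · have := hpp.two_le; rcases hodd with ⟨c, rfl⟩; omega
  have hv : 0 < d.factorization p := Nat.pos_of_ne_zero (Finsupp.mem_support_iff.mp hp)
  have hsq : p ≤ (p - 1) ^ 2 := by
    obtain ⟨q, rfl⟩ : ∃ q, p = q + 3 := ⟨p - 3, by omega⟩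
    simp only [show q + 3 - 1 = q + 2 by omega]; nlinarith
  calc p ^ d.factorization p = p ^ (d.factorization p - 1) * p := by
        rw [← pow_succ, Nat.sub_add_cancel hv]
    _ ≤ (p ^ (d.factorization p - 1)) ^ 2 * (p - 1) ^ 2 :=
        Nat.mul_le_mul (Nat.le_self_pow two_ne_zero _) hsq
    _ = (p ^ (d.factorization p - 1) * (p - 1)) ^ 2 := by ring

theorem exists_dvd_mem_Ioc_of_forall_primeFactors_le {A Z : ℕ} (hA : 0 < A) :
    ∀ {n : ℕ}, A < n → (∀ p ∈ n.primeFactors, p ≤ Z) → ∃ d, d ∣ n ∧ A < d ∧ d ≤ A * Z := by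
  intro n
  induction n using Nat.strong_induction_on with
  | _ n ih =>
    intro hn hZ
    rcases le_or_gt n (A * Z) with hle | hgt
    · exact ⟨n, dvd_rfl, hn, hle⟩
    have hp := Nat.minFac_prime (show n ≠ 1 by omega)
    obtain ⟨m, hm⟩ := Nat.minFac_dvd n
    have hmn : m ∣ n := ⟨_, hm.trans (mul_comm _ _)⟩
    have hAm : A < m := by
      by_contra! h
      have := Nat.mul_le_mul (hZ _ (Nat.mem_primeFactors.mpr ⟨hp, ⟨m, hm⟩, by omega⟩)) h
      rw [← hm, mul_comm] at this; omega
    obtain ⟨d, hdm, hd⟩ := ih m (by rw [hm]; exact lt_mul_left (by omega) hp.one_lt)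
      hAm fun q hq => hZ q (Nat.primeFactors_mono hmn (by omega) hq)
    exact ⟨d, hdm.trans hmn, hd⟩

theorem card_le_div_add_one_of_modEq {s : Finset ℕ} {N M : ℕ}
    (hs : ∀ n ∈ s, n ≤ N) (h : ∀ a ∈ s, ∀ b ∈ s, a ≡ b [MOD M]) : #s ≤ N / M + 1 := by
  calc #s ≤ #(range (N / M + 1)) := by
        refine card_le_card_of_injOn (· / M) (fun n hn => ?_) fun a ha b hb hab => ?_
        · simpa [Nat.lt_succ_iff] using Nat.div_le_div_right (c := M) (hs n hn)
        · rw [← Nat.div_add_mod a M, ← Nat.div_add_mod b M, show a / M = b / M from hab,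
            h a ha b hb]
    _ = N / M + 1 := card_range _

theorem card_filter_dvd_and_dvd_sub_one_le (N d e : ℕ) :
    #{n ∈ Icc 1 N | d ∣ n ∧ e ∣ n - 1} ≤ N / (d * e) + 1 := by
  refine card_le_div_add_one_of_modEq (fun n hn => (mem_Icc.mp
    (mem_filter.mp hn).1).2) fun a ha b hb => ?_
  simp only [mem_filter, mem_Icc] at ha hb
  obtain ⟨⟨ha1, -⟩, hda, hea⟩ := ha
  obtain ⟨⟨hb1, -⟩, hdb, heb⟩ := hb
  have hcop : d.Coprime e :=
    ((((Nat.coprime_self_sub_right ha1).mpr (Nat.coprime_one_right a)).coprime_dvd_left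
      hda).coprime_dvd_right hea)
  refine (Nat.modEq_and_modEq_iff_modEq_mul hcop).mp ⟨?_, ?_⟩
  · exact (Nat.modEq_zero_iff_dvd.mpr hda).trans (Nat.modEq_zero_iff_dvd.mpr hdb).symm
  · exact ((Nat.modEq_iff_dvd' ha1).mpr hea).symm.trans ((Nat.modEq_iff_dvd' hb1).mpr heb)

theorem card_filter_dvd_sub_one_le (M e : ℕ) : #{m ∈ Icc 2 M | e ∣ m - 1} ≤ M / e := by
  calc #{m ∈ Icc 2 M | e ∣ m - 1} ≤ #{x ∈ Ioc 0 (M - 1) | e ∣ x} := by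
        refine card_le_card_of_injOn (· - 1) (fun m hm => ?_) fun a ha b hb hab => ?_
        · simp only [coe_filter, mem_Icc, mem_Ioc, Set.mem_ofPred_eq] at hm ⊢
          exact ⟨⟨by omega, by omega⟩, hm.2⟩
        · simp only [coe_filter, mem_Icc, Set.mem_ofPred_eq] at ha hb
          simp only at hab
          omega
    _ = (M - 1) / e := Nat.Ioc_filter_dvd_card_eq_div _ _
    _ ≤ M / e := Nat.div_le_div_right (Nat.sub_le M 1)

theorem card_filter_dvd_and_dvd_sub_one_and_ne_le (N p e : ℕ) (hp : 0 < p) (he : e ∣ p - 1) :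
    #{n ∈ Icc 1 N | p ∣ n ∧ e ∣ n - 1 ∧ n ≠ p} ≤ N / (p * e) := by
  calc #{n ∈ Icc 1 N | p ∣ n ∧ e ∣ n - 1 ∧ n ≠ p} ≤ #{m ∈ Icc 2 (N / p) | e ∣ m - 1} := by
        refine card_le_card_of_injOn (· / p) (fun n hn => ?_) fun a ha b hb hab => ?_
        · simp only [coe_filter, mem_Icc, Set.mem_ofPred_eq] at hn ⊢
          obtain ⟨⟨hn1, hnN⟩, ⟨m, rfl⟩, hen, hnp⟩ := hn
          rw [Nat.mul_div_cancel_left m hp]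
          have hm : 2 ≤ m := by
            rcases Nat.lt_or_ge m 2 with h | h
            · interval_cases m <;> simp_all
            · exact h
          have hsplit : p * m - 1 = (p - 1) * m + (m - 1) := by
            obtain ⟨q, rfl⟩ : ∃ q, p = q + 1 := ⟨p - 1, by omega⟩
            obtain ⟨j, rfl⟩ : ∃ j, m = j + 1 := ⟨m - 1, by omega⟩
            simp only [Nat.add_sub_cancel]; ring_nf; omega
          refine ⟨⟨hm, (Nat.le_div_iff_mul_le hp).mpr (by linarith)⟩, ?_⟩
          rw [hsplit] at hen
          exact (Nat.dvd_add_right (he.mul_right m)).mp hen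
        · simp only [coe_filter, mem_Icc, Set.mem_ofPred_eq] at ha hb
          rw [← Nat.mul_div_cancel' ha.2.1, ← Nat.mul_div_cancel' hb.2.1]
          exact congrArg (p * ·) hab
    _ ≤ N / p / e := card_filter_dvd_sub_one_le _ _
    _ = N / (p * e) := Nat.div_div_eq_div_mul N p e

theorem one_div_mul_rpow_le_sub {s m : ℝ} (hs0 : 0 < s) (hs1 : s ≤ 1) (hm : 1 < m) :
    1 / (m * (m - 1) ^ s) ≤ ((m - 1) ^ (-s) - m ^ (-s)) / s := by
  have hu : 0 < m - 1 := by linarith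
  have hV : 0 < m ^ s := Real.rpow_pos_of_pos (by linarith) s
  have hbern : m * (m - 1) ^ s ≤ (m - s) * m ^ s := by
    have h := rpow_one_add_le_one_add_mul_self (s := -1 / m) (by
      rw [neg_div, neg_le_neg_iff, div_le_one (by linarith)]; linarith) hs0.le hs1
    rw [show 1 + -1 / m = (m - 1) / m by field_simp; ring, show 1 + s * (-1 / m) = (m - s) / m by
      field_simp; ring, Real.div_rpow hu.le (by linarith), div_le_div_iff₀ hV (by linarith)] at h
    linarith
  rw [Real.rpow_neg hu.le, Real.rpow_neg (by linarith), div_le_div_iff₀ (by positivity) hs0]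
  field_simp
  linarith

theorem sum_Ioc_one_div_mul_rpow_le {s : ℝ} (hs0 : 0 < s) (hs1 : s ≤ 1) {A : ℕ} (hA : 0 < A)
    (M : ℕ) : ∑ m ∈ Ioc A M, 1 / ((m : ℝ) * ((m : ℝ) - 1) ^ s) ≤ (A : ℝ) ^ (-s) / s := by
  have htele : ∀ L, A ≤ L →
      ∑ m ∈ Ioc A L, 1 / ((m : ℝ) * ((m : ℝ) - 1) ^ s) ≤ ((A : ℝ) ^ (-s) - (L : ℝ) ^ (-s)) / s := by
    intro L hL
    induction L, hL using Nat.le_induction with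
    | base => simp
    | succ L hAL ih =>
      rw [sum_Ioc_succ_top hAL]
      have h := one_div_mul_rpow_le_sub hs0 hs1 (m := ((L + 1 : ℕ) : ℝ))
        (by norm_cast; omega)
      rw [Nat.cast_succ, add_sub_cancel_right] at h ⊢
      have hsplit : ((A : ℝ) ^ (-s) - ((L : ℝ) + 1) ^ (-s)) / s =
          ((A : ℝ) ^ (-s) - (L : ℝ) ^ (-s)) / s + ((L : ℝ) ^ (-s) - ((L : ℝ) + 1) ^ (-s)) / s := by
        ring
      linarith
  rcases le_or_gt A M with hAM | hMA
  · refine (htele M hAM).trans (div_le_div_of_nonneg_right ?_ hs0.le)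
    linarith [Real.rpow_nonneg (Nat.cast_nonneg (α := ℝ) M) (-s)]
  · rw [Ioc_eq_empty (by omega), sum_empty]
    positivity

theorem sum_natCast_div_mul_le {K N A M : ℕ} (hK : 0 < K) (hA : 0 < A) {I : Finset ℕ}
    (hI : I ⊆ Ioc A M) (e : ℕ → ℕ) (he : ∀ d ∈ I, d - 1 ≤ e d ^ K) :
    ∑ d ∈ I, ((N / (d * e d) : ℕ) : ℝ) ≤ K * N * (A : ℝ) ^ (-(K : ℝ)⁻¹) := by
  have hK' : (0 : ℝ) < K := by exact_mod_cast hK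
  set f : ℕ → ℝ := fun d => 1 / ((d : ℝ) * ((d : ℝ) - 1) ^ (K : ℝ)⁻¹)
  have hterm : ∀ d ∈ I, ((N / (d * e d) : ℕ) : ℝ) ≤ N * f d := by
    intro d hd
    have hd2 : 2 ≤ d := by have := (mem_Ioc.mp (hI hd)).1; omega
    have hd1 : (1 : ℝ) < d := by exact_mod_cast hd2
    have hy : ((d : ℝ) - 1) ^ (K : ℝ)⁻¹ ≤ e d := by
      rw [Real.rpow_inv_le_iff_of_pos (by linarith) (Nat.cast_nonneg _) hK', Real.rpow_natCast]
      have := he d hd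
      rw [← Nat.cast_le (α := ℝ), Nat.cast_sub (by omega), Nat.cast_pow] at this
      simpa using this
    calc ((N / (d * e d) : ℕ) : ℝ) ≤ N / (d * e d) := by
          simpa only [Nat.cast_mul] using Nat.cast_div_le (α := ℝ) (m := N) (n := d * e d)
      _ ≤ N / (d * ((d : ℝ) - 1) ^ (K : ℝ)⁻¹) := by gcongr
      _ = N * f d := by simp only [f, mul_one_div]
  have hf : ∀ d ∈ Ioc A M, 0 ≤ f d := fun d hd => by
    have : (1 : ℝ) ≤ d := by exact_mod_cast hA.trans (mem_Ioc.mp hd).1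
    simp only [f]; positivity
  calc ∑ d ∈ I, ((N / (d * e d) : ℕ) : ℝ) ≤ ∑ d ∈ I, N * f d := sum_le_sum hterm
    _ ≤ ∑ d ∈ Ioc A M, N * f d :=
        sum_le_sum_of_subset_of_nonneg hI fun d hd _ => mul_nonneg (Nat.cast_nonneg _) (hf d hd)
    _ = N * ∑ d ∈ Ioc A M, f d := (mul_sum _ _ _).symm
    _ ≤ N * ((A : ℝ) ^ (-(K : ℝ)⁻¹) / (K : ℝ)⁻¹) := by
        gcongr
        exact sum_Ioc_one_div_mul_rpow_le (inv_pos.mpr hK')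
          (inv_le_one_of_one_le₀ (by exact_mod_cast hK)) hA M
    _ = K * N * (A : ℝ) ^ (-(K : ℝ)⁻¹) := by rw [div_inv_eq_mul]; ring

theorem odd_of_totient_dvd_sub_one_pow {n k : ℕ} (hn : 2 < n) (h : φ n ∣ (n - 1) ^ k) : Odd n := by
  have h2 : 2 ∣ n - 1 := Nat.prime_two.dvd_of_dvd_pow ((Nat.totient_even hn).two_dvd.trans h)
  rw [Nat.odd_iff]; omega

theorem dvdRoot_totient_dvd_sub_one {n d k : ℕ} (hn : 1 < n) (hd : d ∣ n)
    (h : φ n ∣ (n - 1) ^ k) : dvdRoot k (φ d) ∣ n - 1 :=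
  dvdRoot_dvd_of_dvd_pow (by omega) ((Nat.totient_dvd_of_dvd hd).trans h)

def kLehmerComposites (k N : ℕ) : Finset ℕ :=
  {n ∈ Icc 1 N | 1 < n ∧ ¬ n.Prime ∧ φ n ∣ (n - 1) ^ k}

theorem card_kLehmerComposites_filter_exists_prime_gt_le {k : ℕ} (hk : 0 < k) (N Z : ℕ)
    (hZ : 0 < Z) : (#{n ∈ kLehmerComposites k N | ∃ p ∈ n.primeFactors, Z < p} : ℝ) ≤
      k * N * (Z : ℝ) ^ (-(k : ℝ)⁻¹) := by
  set B : ℕ → Finset ℕ := fun p => {n ∈ Icc 1 N | p ∣ n ∧ dvdRoot k (p - 1) ∣ n - 1 ∧ n ≠ p}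
  have hcover : {n ∈ kLehmerComposites k N | ∃ p ∈ n.primeFactors, Z < p} ⊆
      {p ∈ Ioc Z N | p.Prime}.biUnion B := by
    intro n hn
    simp only [kLehmerComposites, mem_filter, mem_Icc] at hn
    obtain ⟨⟨⟨hn1, hnN⟩, h1n, hnp, hdvd⟩, p, hpf, hZp⟩ := hn
    obtain ⟨hp, hpn, -⟩ := Nat.mem_primeFactors.mp hpf
    have hpn' : p ≤ n := Nat.le_of_dvd (by omega) hpn
    simp only [mem_biUnion, mem_filter, mem_Ioc, mem_Icc, B]
    refine ⟨p, ⟨⟨hZp, by omega⟩, hp⟩, ⟨hn1, hnN⟩, hpn, ?_, fun h => hnp (h ▸ hp)⟩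
    simpa [Nat.totient_prime hp] using dvdRoot_totient_dvd_sub_one h1n hpn hdvd
  calc (#{n ∈ kLehmerComposites k N | ∃ p ∈ n.primeFactors, Z < p} : ℝ)
      ≤ ∑ p ∈ {p ∈ Ioc Z N | p.Prime}, (#(B p) : ℝ) := by
        exact_mod_cast (card_le_card hcover).trans card_biUnion_le
    _ ≤ ∑ p ∈ {p ∈ Ioc Z N | p.Prime}, ((N / (p * dvdRoot k (p - 1)) : ℕ) : ℝ) := by
        refine sum_le_sum fun p hp => ?_
        have hp2 := (mem_filter.mp hp).2.two_le
        exact_mod_cast card_filter_dvd_and_dvd_sub_one_and_ne_le N p _ (by omega)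
          (dvdRoot_dvd hk.ne' (by omega))
    _ ≤ k * N * (Z : ℝ) ^ (-(k : ℝ)⁻¹) :=
        sum_natCast_div_mul_le hk hZ (filter_subset _ _) _ fun p hp =>
          le_dvdRoot_pow hk.ne' (by have := (mem_filter.mp hp).2.two_le; omega)

theorem card_kLehmerComposites_filter_smooth_le {k : ℕ} (hk : 0 < k) (N A Z : ℕ) (hA : 0 < A) :
    (#{n ∈ kLehmerComposites k N | A < n ∧ ∀ p ∈ n.primeFactors, p ≤ Z} : ℝ) ≤
      2 * k * N * (A : ℝ) ^ (-(2 * k : ℝ)⁻¹) + A * Z := by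
  set D : Finset ℕ := {d ∈ Ioc A (A * Z) | Odd d}
  set C : ℕ → Finset ℕ := fun d => {n ∈ Icc 1 N | d ∣ n ∧ dvdRoot k (φ d) ∣ n - 1}
  have hcover : {n ∈ kLehmerComposites k N | A < n ∧ ∀ p ∈ n.primeFactors, p ≤ Z} ⊆
      D.biUnion C := by
    intro n hn
    simp only [kLehmerComposites, mem_filter, mem_Icc] at hn
    obtain ⟨⟨⟨hn1, hnN⟩, h1n, hnp, hdvd⟩, hAn, hsmooth⟩ := hn
    have hodd : Odd n := odd_of_totient_dvd_sub_one_pow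
      (lt_of_le_of_ne h1n fun h => hnp (h ▸ Nat.prime_two)) hdvd
    obtain ⟨d, hdn, hd⟩ := exists_dvd_mem_Ioc_of_forall_primeFactors_le hA hAn hsmooth
    simp only [mem_biUnion, mem_filter, mem_Ioc, mem_Icc, D, C]
    exact ⟨d, ⟨hd, hodd.of_dvd_nat hdn⟩, ⟨hn1, hnN⟩, hdn, dvdRoot_totient_dvd_sub_one h1n hdn hdvd⟩
  have hDcard : (#D : ℝ) ≤ A * Z := by
    have : #D ≤ A * Z :=
      (card_filter_le _ _).trans (by rw [Nat.card_Ioc]; exact Nat.sub_le _ _)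
    exact_mod_cast this
  have hroot : ∀ d ∈ D, d - 1 ≤ dvdRoot k (φ d) ^ (2 * k) := fun d hd => by
    have hodd := (mem_filter.mp hd).2
    calc d - 1 ≤ φ d ^ 2 := (Nat.sub_le d 1).trans (le_totient_sq_of_odd hodd)
      _ ≤ (dvdRoot k (φ d) ^ k) ^ 2 :=
          Nat.pow_le_pow_left (le_dvdRoot_pow hk.ne' (Nat.totient_pos.mpr hodd.pos)) 2
      _ = dvdRoot k (φ d) ^ (2 * k) := by ring
  have hsum : ∑ d ∈ D, ((N / (d * dvdRoot k (φ d)) : ℕ) : ℝ) ≤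
      2 * k * N * (A : ℝ) ^ (-(2 * k : ℝ)⁻¹) := by
    have := sum_natCast_div_mul_le (N := N) (by omega) hA
      (filter_subset (fun d => Odd d) (Ioc A (A * Z))) _ hroot
    push_cast at this
    exact this
  calc (#{n ∈ kLehmerComposites k N | A < n ∧ ∀ p ∈ n.primeFactors, p ≤ Z} : ℝ)
      ≤ ∑ d ∈ D, (#(C d) : ℝ) := by
        exact_mod_cast (card_le_card hcover).trans card_biUnion_le
    _ ≤ ∑ d ∈ D, (((N / (d * dvdRoot k (φ d)) : ℕ) : ℝ) + 1) :=
        sum_le_sum fun d _ => by exact_mod_cast card_filter_dvd_and_dvd_sub_one_le N d _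
    _ = ∑ d ∈ D, ((N / (d * dvdRoot k (φ d)) : ℕ) : ℝ) + #D := by
        rw [sum_add_distrib, sum_const, nsmul_one]
    _ ≤ 2 * k * N * (A : ℝ) ^ (-(2 * k : ℝ)⁻¹) + A * Z := add_le_add hsum hDcard

theorem card_kLehmerComposites_le {k : ℕ} (hk : 0 < k) (N A Z : ℕ) (hA : 0 < A) (hZ : 0 < Z) :
    (#(kLehmerComposites k N) : ℝ) ≤
      A + k * N * (Z : ℝ) ^ (-(k : ℝ)⁻¹) + (2 * k * N * (A : ℝ) ^ (-(2 * k : ℝ)⁻¹) + A * Z) := by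
  set S := kLehmerComposites k N
  have hcover : S ⊆ {n ∈ S | n ≤ A} ∪ {n ∈ S | ∃ p ∈ n.primeFactors, Z < p} ∪
      {n ∈ S | A < n ∧ ∀ p ∈ n.primeFactors, p ≤ Z} := by
    intro n hn
    simp only [mem_union, mem_filter, hn, true_and]
    by_cases hnA : n ≤ A
    · exact Or.inl (Or.inl hnA)
    by_cases hlarge : ∃ p ∈ n.primeFactors, Z < p
    · exact Or.inl (Or.inr hlarge)
    exact Or.inr ⟨not_le.mp hnA, fun p hp => not_lt.mp fun h => hlarge ⟨p, hp, h⟩⟩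
  have hsmall : #{n ∈ S | n ≤ A} ≤ A := by
    calc #{n ∈ S | n ≤ A} ≤ #(Icc 1 A) := card_le_card fun n hn => by
          simp only [S, kLehmerComposites, mem_filter, mem_Icc] at hn ⊢; omega
      _ = A := by simp
  have hcard := (card_le_card hcover).trans
    ((card_union_le _ _).trans (Nat.add_le_add_right (card_union_le _ _) _))
  have hcast : (#S : ℝ) ≤ #{n ∈ S | n ≤ A} + #{n ∈ S | ∃ p ∈ n.primeFactors, Z < p} +
      #{n ∈ S | A < n ∧ ∀ p ∈ n.primeFactors, p ≤ Z} := by exact_mod_cast hcard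
  have hsmall' : (#{n ∈ S | n ≤ A} : ℝ) ≤ A := by exact_mod_cast hsmall
  linarith [card_kLehmerComposites_filter_exists_prime_gt_le hk N Z hZ,
    card_kLehmerComposites_filter_smooth_le hk N A Z hA]

theorem natCeil_rpow_rpow_neg_le {x c s : ℝ} (hx : 0 < x) (hs : 0 ≤ s) :
    (⌈x ^ c⌉₊ : ℝ) ^ (-s) ≤ x ^ (-(c * s)) := by
  calc (⌈x ^ c⌉₊ : ℝ) ^ (-s) ≤ (x ^ c) ^ (-s) :=
        Real.rpow_le_rpow_of_nonpos (by positivity) (Nat.le_ceil _) (by linarith)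
    _ = x ^ (-(c * s)) := by rw [← Real.rpow_mul hx.le, mul_neg]

theorem card_kLehmerComposites_floor_le {k : ℕ} (hk : 0 < k) {x a b : ℝ} (hx : 1 ≤ x)
    (ha : 0 ≤ a) (hb : 0 ≤ b) :
    (#(kLehmerComposites k ⌊x⌋₊) : ℝ) ≤
      2 * x ^ b + k * x ^ (1 - a / k) + 2 * k * x ^ (1 - b / (2 * k)) + 4 * x ^ (a + b) := by
  have hx0 : 0 < x := by linarith
  have hxa : 1 ≤ x ^ a := Real.one_le_rpow hx ha
  have hxb : 1 ≤ x ^ b := Real.one_le_rpow hx hb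
  have hZ : (⌈x ^ a⌉₊ : ℝ) ≤ 2 * x ^ a := Nat.ceil_le_two_mul (by linarith)
  have hA : (⌈x ^ b⌉₊ : ℝ) ≤ 2 * x ^ b := Nat.ceil_le_two_mul (by linarith)
  have hxpow : ∀ t : ℝ, x * x ^ (-t) = x ^ (1 - t) := fun t => by
    rw [sub_eq_add_neg, Real.rpow_add hx0, Real.rpow_one]
  have hk' : (0 : ℝ) ≤ (k : ℝ)⁻¹ := by positivity
  calc (#(kLehmerComposites k ⌊x⌋₊) : ℝ)
      ≤ ⌈x ^ b⌉₊ + k * ⌊x⌋₊ * (⌈x ^ a⌉₊ : ℝ) ^ (-(k : ℝ)⁻¹) +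
          (2 * k * ⌊x⌋₊ * (⌈x ^ b⌉₊ : ℝ) ^ (-(2 * k : ℝ)⁻¹) + ⌈x ^ b⌉₊ * ⌈x ^ a⌉₊) :=
        card_kLehmerComposites_le hk _ _ _ (Nat.ceil_pos.mpr (by linarith))
          (Nat.ceil_pos.mpr (by linarith))
    _ ≤ 2 * x ^ b + k * x * x ^ (-(a * (k : ℝ)⁻¹)) +
          (2 * k * x * x ^ (-(b * (2 * k : ℝ)⁻¹)) + (2 * x ^ b) * (2 * x ^ a)) := by
        gcongr
        · exact Nat.floor_le hx0.le
        · exact natCeil_rpow_rpow_neg_le hx0 hk'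
        · exact Nat.floor_le hx0.le
        · exact natCeil_rpow_rpow_neg_le hx0 (by positivity)
    _ = 2 * x ^ b + k * x ^ (1 - a / k) + 2 * k * x ^ (1 - b / (2 * k)) + 4 * x ^ (a + b) := by
        rw [mul_assoc _ x, mul_assoc _ x, hxpow, hxpow, Real.rpow_add hx0, ← div_eq_mul_inv,
          ← div_eq_mul_inv]
        ring

theorem k_Lehmer_upper_bound :
    ∀ k : ℕ, 2 ≤ k → ∃ C : ℝ, ∀ x : ℝ, 1 ≤ x →
      ((((Finset.Icc 1 ⌊x⌋₊).filter
        (fun n => 1 < n ∧ ¬ n.Prime ∧ n.totient ∣ (n - 1) ^ k)).card : ℝ))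
        ≤ C * x ^ ((1 : ℝ) - 1 / (4 * (k : ℝ) - 1)) := by
  intro k hk
  refine ⟨3 * k + 6, fun x hx => ?_⟩
  have hk' : (2 : ℝ) ≤ k := by exact_mod_cast hk
  set r : ℝ := 1 / (4 * (k : ℝ) - 1) with hr
  have hr0 : 0 < r := one_div_pos.mpr (by linarith)
  have hbound := card_kLehmerComposites_floor_le (k := k) (by omega) hx
    (by positivity : 0 ≤ k * r) (by positivity : 0 ≤ 2 * k * r)
  have hr4 : r * (4 * k - 1) = 1 := by rw [hr, one_div_mul_cancel (by linarith)]
  have hexp : 2 * k * r + k * r ≤ 1 - r := by nlinarith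
  calc _ ≤ 2 * x ^ (2 * k * r) + k * x ^ (1 - k * r / k) +
        2 * k * x ^ (1 - 2 * k * r / (2 * k)) + 4 * x ^ (k * r + 2 * k * r) := hbound
    _ ≤ 2 * x ^ (1 - r) + k * x ^ (1 - r) + 2 * k * x ^ (1 - r) + 4 * x ^ (1 - r) := by
        rw [mul_div_cancel_left₀ r (by positivity), mul_div_cancel_left₀ r (by positivity)]
        gcongr <;> first | exact hx | linarith
    _ = (3 * k + 6) * x ^ (1 - r) := by ring
end

section
/- With r = r(t) = 1 − (log log log t)/(log log t), the sum of p^{-r} over primes p ≤ 2 log t is O(log log t / log log log t) as t → ∞. -/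
/-!
Put `δ = 1 - r` and `x = 2 log t`, and split the primes `p ≤ x` into dyadic blocks
`[2^j, 2^(j+1))`. Since `∏_{p ≤ m} p ≤ 4^m`, such a block holds at most `2^(j+2)/j` primes, each
contributing at most `(2^j)^(δ-1)`; with `b = 2^δ` the sum is at most `4 ∑_{j ≤ log₂ x} b^j / j`.
Below `j = (log₂ x)/2` this is `O(√(x^δ) · log log x)` by the harmonic bound, above it a
geometric sum `O(x^δ / (δ log x))`. For our `δ` we have `x^δ ≍ log log t` and
`δ log x ≍ log log log t`, so the geometric part gives the bound and the first part is of lower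
order.
-/

open Finset Real Filter

theorem mul_card_primes_Ico_two_pow_le (j : ℕ) :
    j * #{p ∈ Ico (2 ^ j) (2 ^ (j + 1)) | p.Prime} ≤ 2 ^ (j + 2) := by
  set S := {p ∈ Ico (2 ^ j) (2 ^ (j + 1)) | p.Prime}
  have hS : S ⊆ {p ∈ range (2 ^ (j + 1) + 1) | p.Prime} := fun p hp => by
    simp only [S, mem_filter, mem_Ico, mem_range] at hp ⊢
    exact ⟨by omega, hp.2⟩
  rw [← Nat.pow_le_pow_iff_right one_lt_two]
  calc 2 ^ (j * #S) = (2 ^ j) ^ #S := pow_mul 2 j #S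
    _ ≤ ∏ p ∈ S, p := pow_card_le_prod _ _ _ fun p hp => (mem_Ico.1 (mem_filter.1 hp).1).1
    _ ≤ primorial (2 ^ (j + 1)) :=
      prod_le_prod_of_subset_of_one_le' hS fun p hp _ => (mem_filter.1 hp).2.one_lt.le
    _ ≤ 4 ^ 2 ^ (j + 1) := primorial_le_four_pow _
    _ = 2 ^ 2 ^ (j + 2) := by rw [show 4 = 2 ^ 2 by rfl, ← pow_mul, pow_succ 2 (j + 1), mul_comm]

theorem sum_primes_Ico_two_pow_rpow_le {δ : ℝ} (hδ : δ ≤ 1) {j : ℕ} (hj : 0 < j) :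
    ∑ p ∈ Ico (2 ^ j : ℕ) (2 ^ (j + 1)) with p.Prime, (p : ℝ) ^ (δ - 1) ≤
      4 * ((2 : ℝ) ^ δ) ^ j / j := by
  set S := {p ∈ Ico (2 ^ j) (2 ^ (j + 1)) | p.Prime}
  have hcard : (#S : ℝ) ≤ 2 ^ (j + 2) / j := by
    rw [le_div_iff₀ (Nat.cast_pos.2 hj), mul_comm]
    exact_mod_cast mul_card_primes_Ico_two_pow_le j
  have hterm : ∀ p ∈ S, (p : ℝ) ^ (δ - 1) ≤ ((2 : ℝ) ^ j) ^ (δ - 1) := fun p hp =>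
    rpow_le_rpow_of_nonpos (by positivity)
      (by exact_mod_cast (mem_Ico.1 (mem_filter.1 hp).1).1) (by linarith)
  calc ∑ p ∈ S, (p : ℝ) ^ (δ - 1) ≤ #S * ((2 : ℝ) ^ j) ^ (δ - 1) := by
        simpa using sum_le_card_nsmul S _ _ hterm
    _ ≤ 2 ^ (j + 2) / j * ((2 : ℝ) ^ j) ^ (δ - 1) := by gcongr
    _ = 4 * (2 ^ δ) ^ j / j := by
        rw [rpow_sub_one (by positivity), rpow_pow_comm zero_le_two]
        field_simp
        ring

theorem sum_Ico_two_pow_eq_sum_dyadic {M : Type*} [AddCommMonoid M] (f : ℕ → M) {a J : ℕ}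
    (h : a ≤ J) :
    ∑ i ∈ Ico (2 ^ a) (2 ^ J), f i = ∑ j ∈ Ico a J, ∑ i ∈ Ico (2 ^ j) (2 ^ (j + 1)), f i := by
  induction J, h using Nat.le_induction with
  | base => simp
  | succ J hJ ih =>
    rw [sum_Ico_succ_top hJ, ← ih, sum_Ico_consecutive _ (Nat.pow_le_pow_right two_pos hJ)
      (Nat.pow_le_pow_right two_pos J.le_succ)]

theorem sum_primesLE_rpow_le_sum_dyadic {δ : ℝ} (hδ : δ ≤ 1) (n : ℕ) :
    ∑ p ∈ Nat.primesLE n, (p : ℝ) ^ (δ - 1) ≤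
      ∑ j ∈ Icc 1 (Nat.log 2 n), 4 * ((2 : ℝ) ^ δ) ^ j / j := by
  set J := Nat.log 2 n
  have hnJ : n < 2 ^ (J + 1) := Nat.lt_pow_succ_log_self one_lt_two n
  have hsub : Nat.primesLE n ⊆ {p ∈ Ico (2 ^ 1) (2 ^ (J + 1)) | p.Prime} := fun p hp => by
    rw [Nat.primesLE_eq_filter_range, mem_filter, mem_range] at hp
    simp only [mem_filter, mem_Ico]
    exact ⟨⟨hp.2.two_le, by omega⟩, hp.2⟩
  calc ∑ p ∈ Nat.primesLE n, (p : ℝ) ^ (δ - 1)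
      ≤ ∑ p ∈ Ico (2 ^ 1 : ℕ) (2 ^ (J + 1)) with p.Prime, (p : ℝ) ^ (δ - 1) :=
        sum_le_sum_of_subset_of_nonneg hsub fun _ _ _ => by positivity
    _ = ∑ j ∈ Ico 1 (J + 1), ∑ p ∈ Ico (2 ^ j : ℕ) (2 ^ (j + 1)) with p.Prime,
          (p : ℝ) ^ (δ - 1) := by
        simp only [sum_filter]
        exact sum_Ico_two_pow_eq_sum_dyadic _ (by omega)
    _ ≤ ∑ j ∈ Icc 1 J, 4 * ((2 : ℝ) ^ δ) ^ j / j := by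
        rw [Ico_add_one_right_eq_Icc]
        exact sum_le_sum fun j hj => sum_primes_Ico_two_pow_rpow_le hδ (mem_Icc.1 hj).1

theorem sum_Icc_pow_div_le_pow_mul_one_add_log {b : ℝ} (hb : 1 ≤ b) (K : ℕ) :
    ∑ j ∈ Icc 1 K, b ^ j / j ≤ b ^ K * (1 + log K) := calc
  ∑ j ∈ Icc 1 K, b ^ j / j ≤ ∑ j ∈ Icc 1 K, b ^ K * (j : ℝ)⁻¹ :=
      sum_le_sum fun j hj => by
        rw [div_eq_mul_inv]
        gcongr
        exact (mem_Icc.1 hj).2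
  _ = b ^ K * harmonic K := by simp [mul_sum, harmonic_eq_sum_Icc]
  _ ≤ b ^ K * (1 + log K) := by
      gcongr
      exact harmonic_le_one_add_log K

theorem sum_Ioc_half_pow_div_le {b : ℝ} (hb : 1 < b) (J : ℕ) :
    ∑ j ∈ Ioc (J / 2) J, b ^ j / j ≤ 2 * b ^ (J + 1) / (J * (b - 1)) := calc
  ∑ j ∈ Ioc (J / 2) J, b ^ j / j ≤ ∑ j ∈ Ioc (J / 2) J, 2 / J * b ^ j :=
      sum_le_sum fun j hj => by
        obtain ⟨hKj, hjJ⟩ := mem_Ioc.1 hj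
        have hj0 : (0 : ℝ) < j := by exact_mod_cast hKj.trans_le' (Nat.zero_le _)
        have hJj : (J : ℝ) ≤ 2 * j := by exact_mod_cast (by omega : J ≤ 2 * j)
        have hjJ' : (j : ℝ) ≤ J := by exact_mod_cast hjJ
        have h : 1 ≤ 2 / (J : ℝ) * j := by
          rw [div_mul_eq_mul_div, le_div_iff₀ (by linarith)]
          linarith
        rw [div_le_iff₀ hj0]
        nlinarith [pow_pos (zero_lt_one.trans hb) j]
  _ ≤ ∑ j ∈ range (J + 1), 2 / J * b ^ j :=
      sum_le_sum_of_subset_of_nonneg (fun j hj => by simp at hj ⊢; omega) fun _ _ _ => by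
        have := hb.le; positivity
  _ = 2 / J * ((b ^ (J + 1) - 1) / (b - 1)) := by rw [← mul_sum, geom_sum_eq hb.ne']
  _ ≤ 2 * b ^ (J + 1) / (J * (b - 1)) := by
      rw [div_mul_div_comm]
      gcongr
      linarith

theorem sum_Icc_pow_div_le {b : ℝ} (hb : 1 < b) (J : ℕ) :
    ∑ j ∈ Icc 1 J, b ^ j / j ≤ b ^ (J / 2) * (1 + log J) + 2 * b ^ (J + 1) / (J * (b - 1)) := by
  have hlog_half : log (J / 2 : ℕ) ≤ log J := by
    rcases (J / 2).eq_zero_or_pos with hK | hK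
    · rw [hK, Nat.cast_zero, log_zero]
      exact log_natCast_nonneg J
    · exact log_le_log (by positivity) (by exact_mod_cast Nat.div_le_self J 2)
  have hIcc (n : ℕ) : Icc 1 n = Ioc 0 n := Icc_add_one_left_eq_Ioc 0 n
  have hlow := sum_Icc_pow_div_le_pow_mul_one_add_log hb.le (J / 2)
  rw [hIcc] at hlow
  rw [hIcc, ← sum_Ioc_consecutive _ (Nat.zero_le (J / 2)) (Nat.div_le_self J 2)]
  gcongr
  · exact hlow.trans (by gcongr)
  · exact sum_Ioc_half_pow_div_le hb J

theorem natLog_mul_log_le_log {b : ℕ} (hb : 1 < b) (n : ℕ) :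
    (Nat.log b n : ℝ) * log b ≤ log n := by
  rcases n.eq_zero_or_pos with rfl | hn
  · simp
  rw [← log_pow]
  gcongr
  exact_mod_cast Nat.pow_log_le_self b hn.ne'

theorem log_lt_natLog_add_one_mul_log {b : ℕ} (hb : 1 < b) {n : ℕ} (hn : n ≠ 0) :
    log n < (Nat.log b n + 1) * log b := by
  rw [← Nat.cast_add_one, ← log_pow]
  gcongr
  exact_mod_cast Nat.lt_pow_succ_log_self hb n

theorem mul_log_le_rpow_sub_one {a : ℝ} (ha : 0 < a) (δ : ℝ) : δ * log a ≤ a ^ δ - 1 := by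
  rw [rpow_def_of_pos ha]
  linarith [add_one_le_exp (log a * δ)]

theorem one_add_log_natLog_two_le {n : ℕ} (hn : 2 ≤ n) :
    1 + log (Nat.log 2 n) ≤ 2 + log (log n) := by
  have hlogn : 0 < log n := log_pos (by exact_mod_cast hn)
  have hJ : (Nat.log 2 n : ℝ) * log 2 ≤ log n := natLog_mul_log_le_log one_lt_two n
  have : log (Nat.log 2 n) ≤ log 2 + log (log n) := by
    rw [← log_mul two_ne_zero hlogn.ne']
    exact log_le_log (by exact_mod_cast Nat.log_pos one_lt_two hn)
      (by nlinarith [log_two_gt_d9, Nat.cast_nonneg (α := ℝ) (Nat.log 2 n)])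
  linarith [log_two_lt_d9]

theorem sum_primesLE_rpow_le {δ : ℝ} (hδ₀ : 0 < δ) (hδ₁ : δ ≤ 1) {n : ℕ} (hn : 2 ≤ n) :
    ∑ p ∈ Nat.primesLE n, (p : ℝ) ^ (δ - 1) ≤
      4 * (√((n : ℝ) ^ δ) * (2 + log (log n)) + 8 * (n : ℝ) ^ δ / (δ * log n)) := by
  set J := Nat.log 2 n
  set b : ℝ := 2 ^ δ
  have hJ : (1 : ℝ) ≤ J := by exact_mod_cast Nat.le_log_of_pow_le one_lt_two hn
  have hlogn : 0 < log n := log_pos (by exact_mod_cast hn)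
  have hb : 1 < b := one_lt_rpow one_lt_two hδ₀
  have hb₂ : b ≤ 2 := by simpa using rpow_le_rpow_of_exponent_le one_le_two hδ₁
  have hbδ : δ * log 2 ≤ b - 1 := mul_log_le_rpow_sub_one two_pos δ
  have hbJ : b ^ J ≤ (n : ℝ) ^ δ := by
    rw [rpow_pow_comm zero_le_two]
    gcongr
    exact_mod_cast Nat.pow_log_le_self 2 (by omega)
  have hJ_ge : log n ≤ 2 * (J * log 2) := by
    have := log_lt_natLog_add_one_mul_log one_lt_two (n := n) (by omega)
    push_cast at this
    nlinarith [log_pos one_lt_two]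
  have hfirst : b ^ (J / 2) ≤ √((n : ℝ) ^ δ) := by
    rw [le_sqrt (by positivity) (by positivity), ← pow_mul]
    exact (pow_le_pow_right₀ hb.le (Nat.div_mul_le_self J 2)).trans hbJ
  have hsecond : 2 * b ^ (J + 1) / (J * (b - 1)) ≤ 8 * (n : ℝ) ^ δ / (δ * log n) := calc
    2 * b ^ (J + 1) / (J * (b - 1)) ≤ 4 * (n : ℝ) ^ δ / (δ * log n / 2) := by
        refine div_le_div₀ (by positivity) ?_ (by positivity) ?_
        · rw [pow_succ]
          nlinarith [pow_pos (zero_lt_one.trans hb) J]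
        · nlinarith [mul_le_mul_of_nonneg_left hbδ (by positivity : (0 : ℝ) ≤ J)]
    _ = 8 * (n : ℝ) ^ δ / (δ * log n) := by field_simp; ring
  have hlogJ := one_add_log_natLog_two_le hn
  calc ∑ p ∈ Nat.primesLE n, (p : ℝ) ^ (δ - 1) ≤ ∑ j ∈ Icc 1 J, 4 * b ^ j / j :=
        sum_primesLE_rpow_le_sum_dyadic hδ₁ n
    _ = 4 * ∑ j ∈ Icc 1 J, b ^ j / j := by simp only [mul_sum, mul_div_assoc]
    _ ≤ 4 * (b ^ (J / 2) * (1 + log J) + 2 * b ^ (J + 1) / (J * (b - 1))) := by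
        gcongr
        exact sum_Icc_pow_div_le hb J
    _ ≤ 4 * (√((n : ℝ) ^ δ) * (2 + log (log n)) + 8 * (n : ℝ) ^ δ / (δ * log n)) := by
        gcongr

theorem rpow_log_log_div_log {y : ℝ} (hy : 1 < y) : y ^ (log (log y) / log y) = log y := by
  rw [rpow_def_of_pos (zero_lt_one.trans hy), mul_div_cancel₀ _ (log_pos hy).ne',
    exp_log (log_pos hy)]

theorem log_log_div_log_mem_Ioc {L : ℝ} (hL : 1 < log L) :
    log (log L) / log L ∈ Set.Ioc 0 1 := by
  refine ⟨div_pos (log_pos hL) (by linarith), ?_⟩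
  rw [div_le_one (by linarith)]
  linarith [log_le_sub_one_of_pos (zero_lt_one.trans hL)]

theorem one_lt_log_of_exp_one_lt {L : ℝ} (hL : exp 1 < L) : 1 < log L := by
  rwa [lt_log_iff_exp_lt ((exp_pos 1).trans hL)]

theorem rpow_log_log_div_log_le {L x : ℝ} (hL : exp 1 < L) (hx₀ : 0 ≤ x) (hx : x ≤ 2 * L) :
    x ^ (log (log L) / log L) ≤ 2 * log L := by
  have hL₀ : 0 < L := (exp_pos 1).trans hL
  have hlogL := one_lt_log_of_exp_one_lt hL
  obtain ⟨hδ₀, hδ₁⟩ := log_log_div_log_mem_Ioc hlogL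
  calc x ^ (log (log L) / log L) ≤ (2 * L) ^ (log (log L) / log L) := by gcongr
    _ = 2 ^ (log (log L) / log L) * log L := by
        rw [mul_rpow zero_le_two hL₀.le, rpow_log_log_div_log (by linarith [add_one_le_exp 1])]
    _ ≤ 2 * log L := by
        gcongr
        simpa using rpow_le_rpow_of_exponent_le one_le_two hδ₁

theorem log_log_le_one_add_log_log {L x : ℝ} (hL : exp 1 < L) (hLx : L ≤ x) (hx : x ≤ 2 * L) :
    log (log x) ≤ 1 + log (log L) := by
  have hL₀ : 0 < L := (exp_pos 1).trans hL
  have hlogL := one_lt_log_of_exp_one_lt hL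
  have hlogx : log x ≤ 2 * log L := calc
    log x ≤ log (2 * L) := log_le_log (by linarith) hx
    _ = log 2 + log L := log_mul two_ne_zero hL₀.ne'
    _ ≤ 2 * log L := by linarith [log_two_lt_d9]
  calc log (log x) ≤ log (2 * log L) := log_le_log (by linarith [log_le_log hL₀ hLx]) hlogx
    _ = log 2 + log (log L) := log_mul two_ne_zero (by linarith)
    _ ≤ 1 + log (log L) := by linarith [log_two_lt_d9]

theorem sum_primesLE_floor_two_mul_rpow_le {L : ℝ} (hL : exp 1 < L) :
    ∑ p ∈ Nat.primesLE ⌊2 * L⌋₊, (p : ℝ) ^ (log (log L) / log L - 1) ≤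
      4 * (√(2 * log L) * (3 + log (log L)) + 16 * (log L / log (log L))) := by
  set δ := log (log L) / log L
  set n := ⌊2 * L⌋₊
  have hlogL := one_lt_log_of_exp_one_lt hL
  have hloglogL : 0 < log (log L) := log_pos hlogL
  obtain ⟨hδ₀, hδ₁⟩ := log_log_div_log_mem_Ioc hlogL
  have hL₁ : 1 < L := by linarith [add_one_le_exp 1]
  have hn_le : (n : ℝ) ≤ 2 * L := Nat.floor_le (by positivity)
  have hn_ge : L ≤ n := by linarith [Nat.lt_floor_add_one (2 * L)]
  have hn : 2 ≤ n := Nat.le_floor (by push_cast; linarith [exp_one_gt_d9])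
  have hnδ : (n : ℝ) ^ δ ≤ 2 * log L := rpow_log_log_div_log_le hL (by positivity) hn_le
  have hloglogn : log (log n) ≤ 1 + log (log L) := log_log_le_one_add_log_log hL hn_ge hn_le
  have hlogn : log L ≤ log n := log_le_log (by linarith) hn_ge
  have hδlogn : log (log L) ≤ δ * log n := calc
    log (log L) = δ * log L := (div_mul_cancel₀ _ (by linarith)).symm
    _ ≤ δ * log n := by gcongr
  calc ∑ p ∈ Nat.primesLE n, (p : ℝ) ^ (δ - 1)
      ≤ 4 * (√((n : ℝ) ^ δ) * (2 + log (log n)) + 8 * (n : ℝ) ^ δ / (δ * log n)) :=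
        sum_primesLE_rpow_le hδ₀ hδ₁ hn
    _ ≤ 4 * (√(2 * log L) * (3 + log (log L)) + 8 * (2 * log L) / log (log L)) := by
        have hloglogn_pos : 0 < log (log n) := log_pos (by linarith)
        gcongr 4 * (?_ + ?_)
        · exact mul_le_mul (sqrt_le_sqrt hnδ) (by linarith) (by positivity) (sqrt_nonneg _)
        · rw [mul_div_assoc, mul_div_assoc]
          gcongr 8 * ?_
          exact div_le_div₀ (by positivity) hnδ hloglogL hδlogn
    _ = 4 * (√(2 * log L) * (3 + log (log L)) + 16 * (log L / log (log L))) := by ring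

theorem eventually_sqrt_two_mul_mul_le_div_log :
    ∀ᶠ u in atTop, √(2 * u) * (3 + log u) ≤ u / log u := by
  have hsmall := (isLittleO_log_rpow_rpow_atTop 2 (by norm_num : (0 : ℝ) < 1 / 2)).bound
    (by norm_num : (0 : ℝ) < 1 / 4)
  filter_upwards [hsmall, tendsto_log_atTop.eventually_ge_atTop 3, eventually_gt_atTop 0]
    with u hu hlog hpos
  have hs : √u * √u = u := mul_self_sqrt hpos.le
  rw [norm_of_nonneg (by positivity), norm_of_nonneg (by positivity), ← sqrt_eq_rpow,
    rpow_two] at hu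
  rw [le_div_iff₀ (by linarith), sqrt_mul zero_le_two]
  have h2 : √2 ≤ 2 := by nlinarith [sq_sqrt (zero_le_two : (0 : ℝ) ≤ 2), sqrt_nonneg 2]
  have hlog_sq : (3 + log u) * log u ≤ 2 * log u ^ 2 := by nlinarith
  calc √2 * √u * (3 + log u) * log u = √2 * √u * ((3 + log u) * log u) := by ring
    _ ≤ 2 * √u * (2 * log u ^ 2) := by gcongr
    _ ≤ 2 * √u * (2 * (1 / 4 * √u)) := by gcongr
    _ = u := by nlinarith

theorem prime_sum_small_exponent_bound :
    ∃ C : ℝ, ∃ t₀ : ℝ, ∀ t : ℝ, t₀ ≤ t →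
      ∑ p ∈ (Finset.range (⌊2 * Real.log t⌋₊ + 1)).filter (fun p => p.Prime),
          (p : ℝ) ^ (-(1 - Real.log (Real.log (Real.log t)) / Real.log (Real.log t)))
        ≤ C * (Real.log (Real.log t) / Real.log (Real.log (Real.log t))) := by
  have hloglog : Tendsto (fun t => log (log t)) atTop atTop :=
    tendsto_log_atTop.comp tendsto_log_atTop
  obtain ⟨t₀, ht₀⟩ := eventually_atTop.1 <| (tendsto_log_atTop.eventually_gt_atTop (exp 1)).and
    (hloglog.eventually eventually_sqrt_two_mul_mul_le_div_log)
  refine ⟨68, t₀, fun t ht => ?_⟩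
  obtain ⟨hlog, hlower_order⟩ := ht₀ t ht
  rw [neg_sub, ← Nat.primesLE_eq_filter_range]
  calc _ ≤ 4 * (√(2 * log (log t)) * (3 + log (log (log t))) +
          16 * (log (log t) / log (log (log t)))) :=
        sum_primesLE_floor_two_mul_rpow_le hlog
    _ ≤ 4 * (log (log t) / log (log (log t)) + 16 * (log (log t) / log (log (log t)))) := by
        gcongr
    _ = 68 * (log (log t) / log (log (log t))) := by ring
end
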